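/- arXiv:1112.3916 — 11 statements merged into one kernel-verified Lean document; each statement's English description precedes it below -/
import Mathlib

section
/- Let G be a profinite group, H a closed subgroup, and K a set of closed subgroups of G such that for every finite subset A of K, the closed subgroup generated by H together with the intersection of A equals G. Then the closed subgroup generated by H and the intersection of all members of K equals G. -/
open Pointwise

/-- Corollary 2.2: in a profinite group `G`, if for every finite subfamily `𝒜`
of a family `𝒦` of closed subgroups the closed subgroup generated by `H`
together with `⋂ 𝒜` is all of `G`, then the closed subgroup generated by `H`
and `⋂ 𝒦` is all of `G`. -/
theorem stmt_1 {G : Type*} [Group G] [TopologicalSpace G] [IsTopologicalGroup G]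
    [CompactSpace G] [T2Space G] [TotallyDisconnectedSpace G]
    (H : Subgroup G) (hH : IsClosed (H : Set G))
    (𝒦 : Set (Subgroup G)) (hclosed : ∀ K ∈ 𝒦, IsClosed (K : Set G))
    (hfin : ∀ 𝒜 : Finset (Subgroup G), ↑𝒜 ⊆ 𝒦 →
      ((H ⊔ ⨅ K ∈ 𝒜, K).topologicalClosure = ⊤)) :
    (H ⊔ ⨅ K ∈ 𝒦, K).topologicalClosure = ⊤ := by
  classical
  by_contra hne
  set C := (H ⊔ ⨅ K ∈ 𝒦, K).topologicalClosure with hCdef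
  have hCclosed : IsClosed (C : Set G) := Subgroup.isClosed_topologicalClosure _
  obtain ⟨g, hg⟩ : ∃ g, g ∉ C := by
    by_contra h
    push_neg at h
    exact hne ((Subgroup.eq_top_iff' C).mpr h)
  -- find an open normal subgroup N with g • N disjoint from C
  have hopen : IsOpen ((fun x => g * x) ⁻¹' (C : Set G)ᶜ) :=
    hCclosed.isOpen_compl.preimage (continuous_mul_left g)
  have h1 : (1 : G) ∈ (fun x => g * x) ⁻¹' (C : Set G)ᶜ := by simpa using hg
  obtain ⟨W, hWclopen, h1W, hWsub⟩ := compact_exists_isClopen_in_isOpen hopen h1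
  obtain ⟨N, hN⟩ :=
    IsTopologicalGroup.exist_openNormalSubgroup_sub_clopen_nhds_of_one hWclopen h1W
  -- U is a proper open (hence closed) subgroup containing C
  set U : Subgroup G := C ⊔ N.toSubgroup with hUdef
  have hUopen : IsOpen (U : Set G) :=
    Subgroup.isOpen_mono (le_sup_right : N.toSubgroup ≤ U) N.isOpen
  have hUclosed : IsClosed (U : Set G) := U.isClosed_of_isOpen hUopen
  have hgU : g ∉ U := by
    intro hgU
    have : g ∈ (C : Set G) * (N.toSubgroup : Set G) := by
      rw [← Subgroup.mul_normal]; exact hgU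
    obtain ⟨c, hc, n, hn, hcn⟩ := this
    have hninv : n⁻¹ ∈ N.toSubgroup := inv_mem hn
    have : g * n⁻¹ ∉ (C : Set G) := hWsub (hN hninv)
    exact this (by rw [← hcn]; simpa using hc)
  have hCU : C ≤ U := le_sup_left
  -- compactness: finitely many members of 𝒦 already have intersection inside U
  have hcover : (U : Set G)ᶜ ⊆ ⋃ K : 𝒦, ((K : Subgroup G) : Set G)ᶜ := by
    intro x hx
    have hxC : x ∉ C := fun h => hx (hCU h)
    have hxinf : x ∉ ⨅ K ∈ 𝒦, K := by
      intro h
      exact hxC (Subgroup.le_topologicalClosure _ (Subgroup.mem_sup_right h))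
    simp only [Subgroup.mem_iInf, not_forall] at hxinf
    obtain ⟨K, hK, hxK⟩ := hxinf
    exact Set.mem_iUnion.mpr ⟨⟨K, hK⟩, hxK⟩
  have hcomp : IsCompact ((U : Set G)ᶜ) := (hUopen.isClosed_compl).isCompact
  obtain ⟨t, ht⟩ := hcomp.elim_finite_subcover _
    (fun K : 𝒦 => (hclosed K K.2).isOpen_compl) hcover
  set 𝒜 : Finset (Subgroup G) := t.image Subtype.val with h𝒜
  have h𝒜sub : ↑𝒜 ⊆ 𝒦 := by
    intro K hK
    simp only [h𝒜, Finset.coe_image, Set.mem_image] at hK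
    obtain ⟨⟨K', hK'⟩, _, rfl⟩ := hK
    exact hK'
  have hle : H ⊔ ⨅ K ∈ 𝒜, K ≤ U := by
    apply sup_le
    · exact le_trans (le_trans le_sup_left (Subgroup.le_topologicalClosure _)) hCU
    · intro x hx
      by_contra hxU
      have := ht hxU
      obtain ⟨⟨K, hK𝒦⟩, hKt, hxK⟩ := Set.mem_iUnion₂.mp this
      have hK𝒜 : K ∈ 𝒜 := by rw [h𝒜]; exact Finset.mem_image.mpr ⟨⟨K, hK𝒦⟩, hKt, rfl⟩
      simp only [Subgroup.mem_iInf] at hx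
      exact hxK (hx K hK𝒜)
  have := hfin 𝒜 h𝒜sub
  have : (⊤ : Subgroup G) ≤ U := by
    rw [← this]
    exact Subgroup.topologicalClosure_minimal _ hle hUclosed
  exact hgU (this (Subgroup.mem_top g))
end

section
/- Let G be a profinite group and H an open subgroup of G. Then there is a finite set of primes π (namely the primes dividing the index of the normal core of H in G) such that for every set of primes π* containing π, the π*-residual of H equals the π*-residual of G, i.e. O^{π*}(H) = O^{π*}(G). -/
set_option linter.unusedSectionVars false

/-- `G/L` is pro-`π`: every open normal subgroup of `G` containing `L` has
`π`-number index. -/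
def IsProPiQuot {G : Type*} [Group G] [TopologicalSpace G] (π : Set ℕ)
    (L : Subgroup G) : Prop :=
  ∀ M : Subgroup G, L ≤ M → M.Normal → IsOpen (M : Set G) →
    ∀ p : ℕ, p.Prime → p ∣ M.index → p ∈ π

/-- The `π`-residual `O^π(G)`: the intersection of all closed normal subgroups
`L` of `G` such that `G/L` is pro-`π`. -/
def piResidual (π : Set ℕ) (G : Type*) [Group G] [TopologicalSpace G] :
    Subgroup G :=
  ⨅ L ∈ {L : Subgroup G | L.Normal ∧ IsClosed (L : Set G) ∧ IsProPiQuot π L}, L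

open Subgroup Pointwise

section Aux

/-- membership in the defining family of `piResidual`. -/
def InFam {G : Type*} [Group G] [TopologicalSpace G] (π : Set ℕ) (L : Subgroup G) : Prop :=
  L.Normal ∧ IsClosed (L : Set G) ∧ IsProPiQuot π L

lemma piResidual_le_of_inFam {G : Type*} [Group G] [TopologicalSpace G] {π : Set ℕ}
    {L : Subgroup G} (hL : InFam π L) : piResidual π G ≤ L := by
  exact iInf₂_le L hL

lemma le_piResidual {G : Type*} [Group G] [TopologicalSpace G] {π : Set ℕ}
    {K : Subgroup G} (h : ∀ L : Subgroup G, InFam π L → K ≤ L) : K ≤ piResidual π G :=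
  le_iInf fun L => le_iInf fun hL => h L hL

variable {G : Type*} [Group G] [TopologicalSpace G] [IsTopologicalGroup G]
  [CompactSpace G] [T2Space G] [TotallyDisconnectedSpace G]

/-- In a profinite group, every open neighbourhood of `1` contains an open normal subgroup. -/
lemma exists_openNormal_sub {U : Set G} (hU : IsOpen U) (h1 : (1 : G) ∈ U) :
    ∃ W : Subgroup G, W.Normal ∧ IsOpen (W : Set G) ∧ (W : Set G) ⊆ U := by
  obtain ⟨V, hVclopen, h1V, hVU⟩ := compact_exists_isClopen_in_isOpen hU h1
  obtain ⟨W, hW⟩ := IsTopologicalGroup.exist_openNormalSubgroup_sub_clopen_nhds_of_one hVclopen h1V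
  exact ⟨W.toSubgroup, W.isNormal', W.isOpen', hW.trans hVU⟩

/-- a closed subgroup is the intersection of the open (normal) subgroups containing it. -/
lemma mem_closed_of_forall_openNormal {K : Subgroup G} [K.Normal] (hK : IsClosed (K : Set G)) {x : G}
    (hx : ∀ U : Subgroup G, IsOpen (U : Set G) → U.Normal → K ≤ U → x ∈ U) : x ∈ K := by
  have : x ∈ _root_.closure (K : Set G) := by
    rw [mem_closure_iff]
    intro V hV hxV
    have h1 : (1 : G) ∈ (fun y => x⁻¹ * y) '' V := ⟨x, hxV, by simp⟩
    have hVo : IsOpen ((fun y => x⁻¹ * y) '' V) := (Homeomorph.mulLeft x⁻¹).isOpenMap V hV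
    obtain ⟨W, hWn, hWo, hWsub⟩ := exists_openNormal_sub hVo h1
    have hxW : x ∈ K ⊔ W := hx _ (Subgroup.isOpen_mono le_sup_right hWo) inferInstance le_sup_left
    have : x ∈ (K : Set G) * (W : Set G) := by
      haveI := hWn
      rw [← Subgroup.mul_normal K W]
      exact_mod_cast hxW
    obtain ⟨k, hk, w, hw, hkw⟩ := this
    refine ⟨k, ?_, hk⟩
    obtain ⟨v, hv, hv'⟩ := hWsub (inv_mem hw)
    have hveq : v = x * w⁻¹ := by
      have := hv'
      simp only at this
      rw [← this]; group
    have hkeq : k = x * w⁻¹ := by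
      rw [← hkw]; group
    rwa [hkeq, ← hveq]
  rwa [hK.closure_eq] at this

lemma index_inf_dvd {A B : Subgroup G} [B.Normal] : (A ⊓ B).index ∣ A.index * B.index := by
  have h1 : (A ⊓ B).relIndex A * A.index = (A ⊓ B).index :=
    relIndex_mul_index inf_le_left
  have h2 : (A ⊓ B).relIndex A = B.relIndex A := by
    rw [inf_comm, inf_relIndex_right]
  have h3 : B.relIndex A ∣ B.index := relIndex_dvd_index_of_normal B A
  calc (A ⊓ B).index = (A ⊓ B).relIndex A * A.index := h1.symm
    _ ∣ B.index * A.index := by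
        exact mul_dvd_mul (h2 ▸ h3) dvd_rfl
    _ = A.index * B.index := mul_comm _ _

lemma index_finset_inf_dvd {ι : Type*} (t : Finset ι) (f : ι → Subgroup G)
    (hn : ∀ i, (f i).Normal) : (⨅ i ∈ t, f i).index ∣ ∏ i ∈ t, (f i).index := by
  classical
  induction t using Finset.induction_on with
  | empty => simp [Subgroup.index_top]
  | @insert a t' h ih =>
    rw [Finset.iInf_insert, Finset.prod_insert h]
    haveI : (⨅ i ∈ t', f i).Normal := by
      constructor
      intro n hn' g
      simp only [Subgroup.mem_iInf] at hn' ⊢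
      exact fun i hi => (hn i).conj_mem n (hn' i hi) g
    calc (f a ⊓ ⨅ i ∈ t', f i).index ∣ (f a).index * (⨅ i ∈ t', f i).index :=
          index_inf_dvd
      _ ∣ (f a).index * ∏ i ∈ t', (f i).index := mul_dvd_mul dvd_rfl ih

/-- Lemma Z': if an open subgroup `M` contains an (arbitrary) intersection of closed
normal subgroups each of which has pro-`π` quotient, then the index of `M` is a
`π`-number. -/
lemma isPiNat_of_iInf_le {π : Set ℕ} {ι : Type*} (K : ι → Subgroup G)
    (hKc : ∀ i, IsClosed ((K i : Subgroup G) : Set G)) (hKn : ∀ i, (K i).Normal)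
    (hKp : ∀ i, IsProPiQuot π (K i)) {M : Subgroup G} (hMo : IsOpen (M : Set G))
    (hle : (⨅ i, K i) ≤ M) {p : ℕ} (hp : p.Prime) (hpd : p ∣ M.index) : p ∈ π := by
  classical
  -- the family of open normal subgroups containing some `K i`
  let T := {U : Subgroup G // IsOpen (U : Set G) ∧ U.Normal ∧ ∃ i, K i ≤ U}
  have hinter : ((M : Set G)ᶜ) ∩ ⋂ u : T, ((u : Subgroup G) : Set G) = ∅ := by
    rw [Set.eq_empty_iff_forall_notMem]
    rintro x ⟨hxM, hxU⟩
    simp only [Set.mem_iInter] at hxU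
    apply hxM
    have hxK : ∀ i, x ∈ K i := by
      intro i
      haveI := hKn i
      refine mem_closed_of_forall_openNormal (hKc i) ?_
      intro U hUo hUn hKU
      exact hxU ⟨U, hUo, hUn, ⟨i, hKU⟩⟩
    exact hle (Subgroup.mem_iInf.mpr hxK)
  have hcomp : IsCompact ((M : Set G)ᶜ) := (hMo.isClosed_compl).isCompact
  obtain ⟨t, ht⟩ := hcomp.elim_finite_subfamily_closed _
    (fun u : T => Subgroup.isClosed_of_isOpen _ u.2.1) hinter
  -- ⨅ over t ≤ M
  have hle2 : (⨅ u ∈ t, (u : Subgroup G)) ≤ M := by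
    intro x hx
    by_contra hxM
    have : x ∈ ((M : Set G)ᶜ) ∩ ⋂ u ∈ t, ((u : Subgroup G) : Set G) := by
      refine ⟨hxM, ?_⟩
      simp only [Set.mem_iInter]
      intro u hu
      exact Subgroup.mem_iInf.mp (Subgroup.mem_iInf.mp hx u) hu
    rw [ht] at this
    exact this
  have hdvd : M.index ∣ ∏ u ∈ t, ((u : Subgroup G)).index :=
    dvd_trans (Subgroup.index_dvd_of_le hle2) (index_finset_inf_dvd t _ fun u => u.2.2.1)
  obtain ⟨u, hu, hpu⟩ := (Nat.Prime.prime hp).exists_mem_finset_dvd (hpd.trans hdvd)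
  obtain ⟨i, hi⟩ := u.2.2.2
  exact hKp i u hi u.2.2.1 u.2.1 p hp hpu


/-- Lemma X: pulling back a member of the family along the inclusion of an open
subgroup whose normal core has `π`-number index. -/
lemma inFam_comap_subtype {π : Set ℕ} {A : Subgroup G} (hAo : IsOpen (A : Set G))
    (hA : ∀ p : ℕ, p.Prime → p ∣ A.normalCore.index → p ∈ π)
    {L : Subgroup G} (hL : InFam π L) :
    InFam π (L.comap A.subtype) := by
  obtain ⟨hLn, hLc, hLp⟩ := hL
  haveI := hLn
  refine ⟨Subgroup.Normal.comap hLn _, ?_, ?_⟩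
  · rw [Subgroup.coe_comap]
    exact hLc.preimage continuous_subtype_val
  intro M' hLM' hM'n hM'o p hp hpd
  haveI : A.FiniteIndex := by
    haveI : Finite (G ⧸ A) := Subgroup.quotient_finite_of_isOpen A hAo
    exact Subgroup.finiteIndex_of_finite_quotient (H := A)
  set NA := A.normalCore with hNA
  have hNAc : IsClosed (NA : Set G) := A.normalCore_isClosed (Subgroup.isClosed_of_isOpen A hAo)
  have hNAo : IsOpen (NA : Set G) := Subgroup.isOpen_of_isClosed_of_finiteIndex NA hNAc
  -- the image of M' in G
  have hmapo : IsOpen ((Subgroup.map A.subtype M' : Subgroup G) : Set G) := by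
    have : (Subgroup.map A.subtype M' : Set G) = Subtype.val '' (M' : Set A) := by
      ext x; simp [Subgroup.mem_map]
    rw [this]
    exact hAo.isOpenMap_subtype_val _ hM'o
  set Y : Subgroup G := Subgroup.map A.subtype M' ⊓ NA with hY
  have hYo : IsOpen (Y : Set G) := by
    rw [hY]; exact hmapo.inter hNAo
  haveI : Y.FiniteIndex := by
    haveI : Finite (G ⧸ Y) := Subgroup.quotient_finite_of_isOpen Y hYo
    exact Subgroup.finiteIndex_of_finite_quotient (H := Y)
  set Q := Y.normalCore with hQ
  have hQc : IsClosed (Q : Set G) := Y.normalCore_isClosed (Subgroup.isClosed_of_isOpen Y hYo)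
  haveI : Q.FiniteIndex := inferInstance
  have hQo : IsOpen (Q : Set G) := Subgroup.isOpen_of_isClosed_of_finiteIndex Q hQc
  -- p divides the index of Q
  have h1 : p ∣ (Subgroup.map A.subtype M').index := by
    have heq : (Subgroup.map A.subtype M').relIndex A * A.index
        = (Subgroup.map A.subtype M').index :=
      relIndex_mul_index (Subgroup.map_subtype_le M')
    have hrel : (Subgroup.map A.subtype M').relIndex A = M'.index := by
      unfold Subgroup.relIndex
      rw [← Subgroup.comap_subtype, Subgroup.comap_map_eq_self_of_injective A.subtype_injective]
    rw [← heq, hrel]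
    exact Dvd.dvd.mul_right hpd A.index
  have h2 : p ∣ Q.index := by
    refine h1.trans (dvd_trans ?_ (Subgroup.index_dvd_of_le Y.normalCore_le))
    exact Subgroup.index_dvd_of_le (inf_le_left : Y ≤ Subgroup.map A.subtype M')
  -- split the index of Q along Q ⊔ L
  set M'' := Q ⊔ L with hM''
  have hsplit : Q.relIndex M'' * M''.index = Q.index := relIndex_mul_index le_sup_left
  rw [← hsplit] at h2
  rcases (Nat.Prime.dvd_mul hp).mp h2 with hcase | hcase
  · -- p divides [M'' : Q] = [L : Q ⊓ L] which divides [L : L ⊓ NA] ∣ NA.index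
    have e1 : Q.relIndex M'' = Q.relIndex L := by
      rw [hM'', sup_comm, relIndex_sup_right]
    have e2 : Q.relIndex L = (Q ⊓ L).relIndex L := (inf_relIndex_right Q L).symm
    have hsub : L ⊓ NA ≤ Q ⊓ L := by
      refine le_inf ?_ inf_le_left
      haveI : (L ⊓ NA).Normal := Subgroup.normal_inf_normal L NA
      rw [hQ]
      refine Subgroup.normal_le_normalCore.mpr ?_
      refine le_inf ?_ inf_le_right
      have : L ⊓ A ≤ Subgroup.map A.subtype M' := by
        have : Subgroup.map A.subtype (L.comap A.subtype) ≤ Subgroup.map A.subtype M' :=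
          Subgroup.map_mono hLM'
        rwa [Subgroup.map_comap_eq, A.range_subtype, inf_comm] at this
      exact le_trans (inf_le_inf_left L A.normalCore_le) this
    have e3 : (Q ⊓ L).relIndex L ∣ (L ⊓ NA).relIndex L := by
      refine Dvd.intro_left _ (relIndex_mul_relIndex _ _ L hsub inf_le_right)
    have e4 : (L ⊓ NA).relIndex L = NA.relIndex L := by
      rw [inf_comm, inf_relIndex_right]
    have e5 : NA.relIndex L ∣ NA.index := relIndex_dvd_index_of_normal NA L
    rw [e1, e2] at hcase
    exact hA p hp ((hcase.trans e3).trans (e4 ▸ e5))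
  · -- p divides [G : M''] and M'' is an open normal subgroup containing L
    refine hLp M'' le_sup_right inferInstance ?_ p hp hcase
    exact Subgroup.isOpen_mono (le_sup_left : Q ≤ M'') hQo

end Aux

section Transport

/-- Lemma T: the family is preserved by topological group isomorphisms. -/
lemma inFam_map_equiv {G₁ G₂ : Type*} [Group G₁] [TopologicalSpace G₁]
    [Group G₂] [TopologicalSpace G₂] {π : Set ℕ} (e : G₁ ≃* G₂)
    (he : Continuous e) (hes : Continuous e.symm) {K : Subgroup G₁}
    (hK : InFam π K) : InFam π (K.map e.toMonoidHom) := by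
  obtain ⟨hKn, hKc, hKp⟩ := hK
  refine ⟨hKn.map e.toMonoidHom e.surjective, ?_, ?_⟩
  · have : ((K.map e.toMonoidHom : Subgroup G₂) : Set G₂) = e.symm ⁻¹' (K : Set G₁) := by
      ext x
      simp only [SetLike.mem_coe, Subgroup.mem_map, Set.mem_preimage]
      constructor
      · rintro ⟨y, hy, rfl⟩; simpa using hy
      · intro hx; exact ⟨e.symm x, hx, by simp⟩
    rw [this]
    exact hKc.preimage hes
  intro M₂ hKM₂ hM₂n hM₂o p hp hpd
  have hcomapn : (M₂.comap e.toMonoidHom).Normal := Subgroup.Normal.comap hM₂n _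
  have hcomapo : IsOpen ((M₂.comap e.toMonoidHom : Subgroup G₁) : Set G₁) := by
    rw [Subgroup.coe_comap]
    exact hM₂o.preimage he
  have hKle : K ≤ M₂.comap e.toMonoidHom := by
    rw [← Subgroup.map_le_iff_le_comap]
    exact hKM₂
  have hidx : (M₂.comap e.toMonoidHom).index = M₂.index :=
    M₂.index_comap_of_surjective e.surjective
  exact hKp _ hKle hcomapn hcomapo p hp (hidx ▸ hpd)

end Transport


section Main

variable {G : Type*} [Group G] [TopologicalSpace G] [IsTopologicalGroup G]
  [CompactSpace G] [T2Space G] [TotallyDisconnectedSpace G]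

/-- the `G`-core of a member of the family of an open subgroup `H` is in the family of `G`. -/
lemma inFam_conjCore {π' : Set ℕ} {H : Subgroup G} (hH : IsOpen (H : Set G))
    (hA' : ∀ p : ℕ, p.Prime → p ∣ H.normalCore.index → p ∈ π')
    {L' : Subgroup ↥H} (hL' : InFam π' L') :
    InFam π' (⨅ g : G, (Subgroup.map H.subtype L').comap (MulAut.conj g).toMonoidHom) := by
  have hHc : IsClosed (H : Set G) := Subgroup.isClosed_of_isOpen H hH
  haveI : CompactSpace ↥H := isCompact_iff_compactSpace.mp hHc.isCompact
  haveI : H.FiniteIndex := by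
    haveI : Finite (G ⧸ H) := Subgroup.quotient_finite_of_isOpen H hH
    exact Subgroup.finiteIndex_of_finite_quotient (H := H)
  set N := H.normalCore with hNdef
  have hNH : N ≤ H := H.normalCore_le
  have hNc : IsClosed (N : Set G) := H.normalCore_isClosed hHc
  haveI : N.FiniteIndex := inferInstance
  have hNo : IsOpen (N : Set G) := Subgroup.isOpen_of_isClosed_of_finiteIndex N hNc
  haveI : CompactSpace ↥N := isCompact_iff_compactSpace.mp hNc.isCompact
  haveI hNn : N.Normal := H.normalCore_normal
  set J := Subgroup.map H.subtype L' with hJdef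
  have hJc : IsClosed (J : Set G) := by
    have h1 : (J : Set G) = Subtype.val '' (L' : Set ↥H) := by
      ext x; simp [hJdef, Subgroup.mem_map]
    have h2 : IsCompact (L' : Set ↥H) := hL'.2.1.isCompact
    rw [h1]
    exact (h2.image continuous_subtype_val).isClosed
  have hJmemH : ∀ x : G, x ∈ J → x ∈ H := by
    intro x hx
    obtain ⟨z, _, rfl⟩ := Subgroup.mem_map.mp hx
    exact z.2
  have hJnormH : ∀ h : G, h ∈ H → ∀ x : G, x ∈ J → h * x * h⁻¹ ∈ J := by
    intro h hh x hx
    obtain ⟨z, hz, rfl⟩ := Subgroup.mem_map.mp hx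
    haveI := hL'.1
    exact Subgroup.mem_map.mpr ⟨⟨h, hh⟩ * z * ⟨h, hh⟩⁻¹, hL'.1.conj_mem z hz ⟨h, hh⟩, rfl⟩
  set LL := ⨅ g : G, J.comap (MulAut.conj g).toMonoidHom with hLLdef
  have hmemLL : ∀ x : G, x ∈ LL ↔ ∀ g : G, g * x * g⁻¹ ∈ J := by
    intro x
    rw [hLLdef]
    simp [Subgroup.mem_iInf, Subgroup.mem_comap, MulAut.conj_apply]
  refine ⟨?_, ?_, ?_⟩
  · constructor
    intro n hn g0
    rw [hmemLL] at hn ⊢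
    intro g
    have := hn (g * g0)
    have heq : g * (g0 * n * g0⁻¹) * g⁻¹ = g * g0 * n * (g * g0)⁻¹ := by group
    rw [heq]
    convert this using 2
  · have : (LL : Set G) = ⋂ g : G, (fun x => g * x * g⁻¹) ⁻¹' (J : Set G) := by
      ext x
      simp only [SetLike.mem_coe, hmemLL, Set.mem_iInter, Set.mem_preimage]
    rw [this]
    refine isClosed_iInter fun g => hJc.preimage ?_
    exact (continuous_const.mul continuous_id).mul continuous_const
  -- the pro-π' quotient property
  intro M hLLM hMn hMo p hp hpd
  -- first member of the family of N : J ∩ N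
  have hJN : InFam π' (J.comap N.subtype) := by
    have hsgo : IsOpen ((N.subgroupOf H : Subgroup ↥H) : Set ↥H) := by
      rw [Subgroup.coe_subgroupOf]
      exact hNo.preimage continuous_subtype_val
    haveI hsgn : (N.subgroupOf H).Normal := Subgroup.Normal.comap hNn _
    have hsgA : ∀ p : ℕ, p.Prime → p ∣ (N.subgroupOf H).normalCore.index → p ∈ π' := by
      intro p hp hd
      rw [Subgroup.normalCore_eq_self] at hd
      refine hA' p hp (hd.trans ?_)
      exact relIndex_dvd_index_of_normal N H
    have hC0 : InFam π' (L'.comap (N.subgroupOf H).subtype) :=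
      inFam_comap_subtype hsgo hsgA hL'
    set e := Subgroup.subgroupOfEquivOfLe hNH with hedef
    have hec : Continuous e := by
      exact Continuous.subtype_mk (continuous_subtype_val.comp continuous_subtype_val) _
    have hesc : Continuous e.symm := by
      exact Continuous.subtype_mk (Continuous.subtype_mk continuous_subtype_val _) _
    have hfam := inFam_map_equiv e hec hesc hC0
    have heq : (L'.comap (N.subgroupOf H).subtype).map e.toMonoidHom = J.comap N.subtype := by
      ext x
      simp only [Subgroup.mem_map, Subgroup.mem_comap]
      constructor
      · rintro ⟨y, hy, rfl⟩
        exact Subgroup.mem_map.mpr ⟨(y : ↥H), hy, rfl⟩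
      · intro hx
        obtain ⟨z, hz, hzx⟩ := Subgroup.mem_map.mp hx
        have hzx' : (z : G) = (x : G) := hzx
        have hzN : z ∈ N.subgroupOf H := by
          rw [Subgroup.mem_subgroupOf, hzx']
          exact x.2
        refine ⟨⟨z, hzN⟩, hz, ?_⟩
        apply Subtype.ext
        exact hzx
    rwa [heq] at hfam
  -- conjugated members
  have hBfam : ∀ g : G, InFam π' ((J.comap (MulAut.conj g).toMonoidHom).comap N.subtype) := by
    intro g
    have hconj : ∀ x : G, x ∈ N → g * x * g⁻¹ ∈ N := fun x hx => hNn.conj_mem x hx g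
    have hconj' : ∀ x : G, x ∈ N → g⁻¹ * x * g ∈ N := by
      intro x hx
      have := hNn.conj_mem x hx g⁻¹
      simpa using this
    set cg : ↥N ≃* ↥N :=
      { toFun := fun x => ⟨g * x * g⁻¹, hconj x x.2⟩
        invFun := fun x => ⟨g⁻¹ * x * g, hconj' x x.2⟩
        left_inv := fun x => Subtype.ext (by simp only; group)
        right_inv := fun x => Subtype.ext (by simp only; group)
        map_mul' := fun x y => Subtype.ext (by
          simp only [Subgroup.coe_mul]
          group) } with hcgdef
    have hcgc : Continuous cg := by
      exact Continuous.subtype_mk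
        ((continuous_const.mul continuous_subtype_val).mul continuous_const) _
    have hcgsc : Continuous cg.symm := by
      exact Continuous.subtype_mk
        ((continuous_const.mul continuous_subtype_val).mul continuous_const) _
    have heq2 : (J.comap (MulAut.conj g).toMonoidHom).comap N.subtype
        = (J.comap N.subtype).map cg.symm.toMonoidHom := by
      ext x
      rw [Subgroup.mem_map_equiv, MulEquiv.symm_symm]
      simp only [Subgroup.mem_comap, MulEquiv.coe_toMonoidHom, MulAut.conj_apply]
      rw [show (N.subtype (cg x) : G) = g * (x : G) * g⁻¹ from rfl]
      rfl
    rw [heq2]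
    exact inFam_map_equiv cg.symm hcgsc (by simpa using hcgc) hJN
  -- split the index
  have hsplit : p ∣ (M.comap N.subtype).index ∨ p ∣ N.index := by
    have d1 : M.index ∣ (M ⊓ N).index := Subgroup.index_dvd_of_le inf_le_left
    have d2 : (M ⊓ N).relIndex N * N.index = (M ⊓ N).index := relIndex_mul_index inf_le_right
    have d3 : (M ⊓ N).relIndex N = (M.comap N.subtype).index := by
      rw [inf_relIndex_right]; rfl
    have : p ∣ (M.comap N.subtype).index * N.index := by
      rw [← d3, d2]; exact hpd.trans d1
    exact hp.dvd_mul.mp this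
  rcases hsplit with h | h
  swap
  · exact hA' p hp h
  · refine isPiNat_of_iInf_le (fun g : G => (J.comap (MulAut.conj g).toMonoidHom).comap N.subtype)
      (fun g => (hBfam g).2.1) (fun g => (hBfam g).1) (fun g => (hBfam g).2.2) ?_ ?_ hp h
    · rw [Subgroup.coe_comap]
      exact hMo.preimage continuous_subtype_val
    · intro x hx
      rw [Subgroup.mem_iInf] at hx
      rw [Subgroup.mem_comap]
      apply hLLM
      rw [hmemLL]
      intro g
      have := Subgroup.mem_comap.mp (hx g)
      rw [Subgroup.mem_comap] at this
      simpa [MulAut.conj_apply] using this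

end Main


/-- Lemma 2.6: for an open subgroup `H` of a profinite group `G`, with `π` the
(finite) set of primes dividing the index of the normal core of `H`, one has
`O^{π*}(H) = O^{π*}(G)` for every set of primes `π*` containing `π`. -/
theorem stmt_4 {G : Type*} [Group G] [TopologicalSpace G] [IsTopologicalGroup G]
    [CompactSpace G] [T2Space G] [TotallyDisconnectedSpace G]
    (H : Subgroup G) (hH : IsOpen (H : Set G)) :
    {p : ℕ | p.Prime ∧ p ∣ (H.normalCore).index}.Finite ∧
      ∀ π' : Set ℕ, {p : ℕ | p.Prime ∧ p ∣ (H.normalCore).index} ⊆ π' →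
        (piResidual π' H).map H.subtype = piResidual π' G := by
  have hHc : IsClosed (H : Set G) := Subgroup.isClosed_of_isOpen H hH
  haveI : CompactSpace ↥H := isCompact_iff_compactSpace.mp hHc.isCompact
  haveI : H.FiniteIndex := by
    haveI : Finite (G ⧸ H) := Subgroup.quotient_finite_of_isOpen H hH
    exact Subgroup.finiteIndex_of_finite_quotient (H := H)
  haveI : H.normalCore.FiniteIndex := inferInstance
  have hNne : H.normalCore.index ≠ 0 := Subgroup.FiniteIndex.index_ne_zero
  constructor
  · refine Set.Finite.subset (Set.finite_Icc 1 H.normalCore.index) ?_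
    rintro p ⟨hp, hd⟩
    exact Set.mem_Icc.mpr ⟨hp.pos, Nat.le_of_dvd (Nat.pos_of_ne_zero hNne) hd⟩
  · intro π' hπ'
    have hA' : ∀ p : ℕ, p.Prime → p ∣ H.normalCore.index → p ∈ π' :=
      fun p hp hd => hπ' ⟨hp, hd⟩
    have hNc : IsClosed ((H.normalCore : Subgroup G) : Set G) := H.normalCore_isClosed hHc
    have hNfam : InFam π' H.normalCore :=
      ⟨H.normalCore_normal, hNc,
        fun M hNM _ _ q hq hqd => hA' q hq (hqd.trans (Subgroup.index_dvd_of_le hNM))⟩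
    have hpGH : piResidual π' G ≤ H := (piResidual_le_of_inFam hNfam).trans H.normalCore_le
    apply le_antisymm
    · refine le_piResidual ?_
      intro L hL
      have hfamH : InFam π' (L.comap H.subtype) := inFam_comap_subtype hH hA' hL
      have h1 : piResidual π' ↥H ≤ L.comap H.subtype := piResidual_le_of_inFam hfamH
      refine (Subgroup.map_mono h1).trans ?_
      rw [Subgroup.map_comap_eq, Subgroup.range_subtype]
      exact inf_le_right
    · have hres : piResidual π' G
          = Subgroup.map H.subtype ((piResidual π' G).comap H.subtype) := by
        rw [Subgroup.map_comap_eq, Subgroup.range_subtype]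
        exact (inf_eq_right.mpr hpGH).symm
      rw [hres]
      refine Subgroup.map_mono (le_piResidual ?_)
      intro L' hL'
      have hcore := inFam_conjCore hH hA' hL'
      have h1 : piResidual π' G
          ≤ ⨅ g : G, (Subgroup.map H.subtype L').comap (MulAut.conj g).toMonoidHom :=
        piResidual_le_of_inFam hcore
      have h2 : (⨅ g : G, (Subgroup.map H.subtype L').comap (MulAut.conj g).toMonoidHom)
          ≤ Subgroup.map H.subtype L' := by
        refine (iInf_le _ (1 : G)).trans ?_
        intro x hx
        rw [Subgroup.mem_comap] at hx
        simpa using hx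
      calc (piResidual π' G).comap H.subtype
          ≤ (Subgroup.map H.subtype L').comap H.subtype :=
            Subgroup.comap_mono (h1.trans h2)
        _ = L' := Subgroup.comap_map_eq_self_of_injective H.subtype_injective L'
end

section
/- Let G and H be profinite groups and suppose there is a continuous injective homomorphism φ from G onto an open subgroup K of H. Then there is a finite set of primes π such that for every set of primes π* containing π, there is a continuous injective homomorphism from G/O^{π*}(G) to H/O^{π*}(H) whose image is K·O^{π*}(H)/O^{π*}(H). -/
instance piResidualNormal (π : Set ℕ) (G : Type*) [Group G]
    [TopologicalSpace G] : (piResidual π G).Normal := by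
  constructor
  intro n hn g
  simp only [piResidual, Subgroup.mem_iInf] at hn ⊢
  intro L hL
  exact hL.1.conj_mem n (hn L hL) g

open Subgroup Pointwise

/-- Elements whose order has no prime factor in `π`. -/
def piFreeSet (π : Set ℕ) (Γ : Type*) [Group Γ] : Set Γ :=
  {y | ∀ p : ℕ, p.Prime → p ∈ π → ¬ p ∣ orderOf y}

/-- The subgroup generated by all `π`-free elements. -/
def piGen (π : Set ℕ) (Γ : Type*) [Group Γ] : Subgroup Γ :=
  Subgroup.normalClosure (piFreeSet π Γ)

instance piGenNormal (π : Set ℕ) (Γ : Type*) [Group Γ] : (piGen π Γ).Normal :=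
  Subgroup.normalClosure_normal

lemma piFree_mem_of_index (π : Set ℕ) {Γ : Type*} [Group Γ] (T : Subgroup Γ) [T.Normal]
    (hTπ : ∀ p : ℕ, p.Prime → p ∣ T.index → p ∈ π)
    {y : Γ} (hy : y ∈ piFreeSet π Γ) (hT0 : T.index ≠ 0) : y ∈ T := by
  set d := orderOf (QuotientGroup.mk y : Γ ⧸ T) with hd
  have hdy : d ∣ orderOf y := orderOf_map_dvd (QuotientGroup.mk' T) y
  have hdT : d ∣ T.index := by
    rw [Subgroup.index_eq_card]; exact orderOf_dvd_natCard _
  have hd1 : d = 1 := by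
    by_contra h
    exact hy d.minFac (Nat.minFac_prime h)
      (hTπ _ (Nat.minFac_prime h) ((d.minFac_dvd).trans hdT))
      ((d.minFac_dvd).trans hdy)
  exact (QuotientGroup.eq_one_iff y).mp (orderOf_eq_one_iff.mp hd1)

lemma piGen_le_normal (π : Set ℕ) {Γ : Type*} [Group Γ] (T : Subgroup Γ) [T.Normal]
    (hT0 : T.index ≠ 0) (hTπ : ∀ p : ℕ, p.Prime → p ∣ T.index → p ∈ π) :
    piGen π Γ ≤ T :=
  Subgroup.normalClosure_le_normal fun _ hy => piFree_mem_of_index π T hTπ hy hT0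

lemma piFreeSet_conj (π : Set ℕ) {Γ : Type*} [Group Γ] :
    Group.conjugatesOfSet (piFreeSet π Γ) ⊆ piFreeSet π Γ := by
  intro z hz
  obtain ⟨a, ha, hconj⟩ := Group.mem_conjugatesOfSet_iff.mp hz
  obtain ⟨c, rfl⟩ := isConj_iff.mp hconj
  intro p hp hpπ hdvd
  refine ha p hp hpπ ?_
  rwa [show c * a * c⁻¹ = (MulAut.conj c) a by simp [MulAut.conj],
    MulEquiv.orderOf_eq (MulAut.conj c) a] at hdvd

lemma piGen_le_of_rel (π : Set ℕ) {Γ : Type*} [Group Γ] (N K C : Subgroup Γ) [N.Normal]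
    (hN0 : N.index ≠ 0) (hNπ : ∀ p : ℕ, p.Prime → p ∣ N.index → p ∈ π)
    (hNK : N ≤ K)
    (hconj : ∀ k ∈ K, ∀ c ∈ C, k * c * k⁻¹ ∈ C)
    (hC0 : C.relIndex K ≠ 0)
    (hCπ : ∀ p : ℕ, p.Prime → p ∣ C.relIndex K → p ∈ π) :
    piGen π Γ ≤ C := by
  haveI : (C.subgroupOf K).Normal := by
    constructor
    rintro ⟨c, hcK⟩ hc ⟨k, hkK⟩
    simp only [Subgroup.mem_subgroupOf] at hc ⊢
    exact hconj k hkK c hc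
  rw [piGen, Subgroup.normalClosure, Subgroup.closure_le]
  intro z hz
  have hzf : z ∈ piFreeSet π Γ := piFreeSet_conj π hz
  have hzN : z ∈ N := piFree_mem_of_index π N hNπ hzf hN0
  have hzK : z ∈ K := hNK hzN
  have hmem : (⟨z, hzK⟩ : K) ∈ C.subgroupOf K := by
    apply piFree_mem_of_index π (C.subgroupOf K) hCπ _ hC0
    intro p hp hpπ hdvd
    exact hzf p hp hpπ (by rwa [Subgroup.orderOf_mk] at hdvd)
  exact (Subgroup.mem_subgroupOf).mp hmem

lemma piGen_index (π : Set ℕ) {Γ : Type*} [Group Γ] [Finite Γ] :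
    ∀ p : ℕ, p.Prime → p ∣ (piGen π Γ).index → p ∈ π := by
  intro p hp hpd
  by_contra hpπ
  haveI : Fact p.Prime := ⟨hp⟩
  have hcard : p ∣ Nat.card (Γ ⧸ piGen π Γ) := by rwa [← Subgroup.index_eq_card]
  obtain ⟨xb, hxb⟩ := exists_prime_orderOf_dvd_card' (G := Γ ⧸ piGen π Γ) p hcard
  obtain ⟨x, rfl⟩ := QuotientGroup.mk_surjective xb
  set k := orderOf x with hk
  have hk0 : k ≠ 0 := (orderOf_pos x).ne'
  set m := ordCompl[p] k with hm
  have hmk : m ∣ k := Nat.ordCompl_dvd k p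
  have hmem : x ^ m ∈ piGen π Γ := by
    apply Subgroup.subset_normalClosure
    intro q hq hqπ hqd
    have h1 : orderOf (x ^ m) = p ^ k.factorization p := by
      rw [orderOf_pow, ← hk, Nat.gcd_eq_right hmk, hm]
      exact Nat.div_eq_of_eq_mul_left (Nat.ordCompl_pos p hk0)
        (Nat.ordProj_mul_ordCompl_eq_self k p).symm
    rw [h1] at hqd
    have hqp : q = p := (Nat.prime_dvd_prime_iff_eq hq hp).mp (hq.dvd_of_dvd_pow hqd)
    exact hpπ (hqp ▸ hqπ)
  have hone : (QuotientGroup.mk x : Γ ⧸ piGen π Γ) ^ m = 1 := by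
    rw [← QuotientGroup.mk_pow]
    exact (QuotientGroup.eq_one_iff _).mpr hmem
  have hpm : p ∣ m := by
    have h2 : orderOf (QuotientGroup.mk x : Γ ⧸ piGen π Γ) ∣ m :=
      orderOf_dvd_iff_pow_eq_one.mpr hone
    rwa [hxb] at h2
  exact Nat.not_dvd_ordCompl hp hk0 hpm

lemma piGen_le_comap (π : Set ℕ) {Γ Γ' : Type*} [Group Γ] [Group Γ'] (f : Γ →* Γ') :
    piGen π Γ ≤ (piGen π Γ').comap f :=
  Subgroup.normalClosure_le_normal fun y hy =>
    Subgroup.mem_comap.mpr (Subgroup.subset_normalClosure fun p hp hpπ hpd =>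
      hy p hp hpπ (hpd.trans (orderOf_map_dvd f y)))
section Profinite

variable (π : Set ℕ) {H : Type*} [Group H] [TopologicalSpace H] [IsTopologicalGroup H]
  [CompactSpace H] [T2Space H] [TotallyDisconnectedSpace H]

/-- The preimage in `H` of the `π`-free generated subgroup of `H ⧸ W`. -/
def DW (W : OpenNormalSubgroup H) : Subgroup H :=
  (piGen π (H ⧸ W.toSubgroup)).comap (QuotientGroup.mk' W.toSubgroup)

instance DW_normal (W : OpenNormalSubgroup H) : (DW π W).Normal :=
  Subgroup.normal_comap _

lemma W_le_DW (W : OpenNormalSubgroup H) : W.toSubgroup ≤ DW π W := by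
  intro w hw
  have h1 : QuotientGroup.mk' W.toSubgroup w = 1 := (QuotientGroup.eq_one_iff w).mpr hw
  show QuotientGroup.mk' W.toSubgroup w ∈ piGen π (H ⧸ W.toSubgroup)
  rw [h1]; exact one_mem _

lemma DW_isOpen (W : OpenNormalSubgroup H) : IsOpen ((DW π W : Subgroup H) : Set H) :=
  Subgroup.isOpen_mono (W_le_DW π W) W.isOpen

lemma DW_index (W : OpenNormalSubgroup H) :
    (DW π W).index = (piGen π (H ⧸ W.toSubgroup)).index :=
  Subgroup.index_comap_of_surjective _ (QuotientGroup.mk'_surjective _)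

lemma DW_piQuot (W : OpenNormalSubgroup H) : IsProPiQuot π (DW π W) := by
  intro M hM _ _ p hp hpd
  haveI : Finite (H ⧸ W.toSubgroup) := W.toSubgroup.quotient_finite_of_isOpen W.isOpen
  have hdvd : p ∣ (piGen π (H ⧸ W.toSubgroup)).index := by
    rw [← DW_index π W]
    exact hpd.trans (Subgroup.index_dvd_of_le hM)
  exact piGen_index π p hp hdvd

lemma resid_le_DW (W : OpenNormalSubgroup H) : piResidual π H ≤ DW π W := by
  have hmem : DW π W ∈ {L : Subgroup H | L.Normal ∧ IsClosed (L : Set H) ∧ IsProPiQuot π L} :=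
    ⟨inferInstance, Subgroup.isClosed_of_isOpen _ (DW_isOpen π W), DW_piQuot π W⟩
  exact biInf_le _ hmem

lemma exists_openNormal_avoid (L : Subgroup H) [L.Normal] (hLc : IsClosed (L : Set H))
    {x : H} (hx : x ∉ L) :
    ∃ V : OpenNormalSubgroup H, x ∉ L ⊔ V.toSubgroup := by
  have hU : IsOpen ((x * ·) ⁻¹' ((L : Set H)ᶜ)) :=
    (hLc.isOpen_compl).preimage (continuous_mul_left x)
  have h1U : (1 : H) ∈ (x * ·) ⁻¹' ((L : Set H)ᶜ) := by simpa using hx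
  obtain ⟨Vs, hVc, h1V, hVU⟩ := compact_exists_isClopen_in_isOpen hU h1U
  obtain ⟨V, hV⟩ := IsTopologicalGroup.exist_openNormalSubgroup_sub_clopen_nhds_of_one hVc h1V
  refine ⟨V, fun hxT => ?_⟩
  have hxT' : x ∈ (L : Set H) * (V.toSubgroup : Set H) := by
    rw [← Subgroup.mul_normal]
    exact hxT
  rw [Set.mem_mul] at hxT'
  obtain ⟨l, hl, w, hw, rfl⟩ := hxT'
  have : (l * w) * w⁻¹ ∈ (L : Set H)ᶜ := hVU (hV (inv_mem hw))
  simp only [mul_inv_cancel_right] at this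
  exact this hl

lemma DW_le_sup (L : Subgroup H) [L.Normal] (hLpi : IsProPiQuot π L)
    (W : OpenNormalSubgroup H) : DW π W ≤ L ⊔ W.toSubgroup := by
  set T := L ⊔ W.toSubgroup with hT
  haveI : T.Normal := Subgroup.sup_normal L W.toSubgroup
  have hTopen : IsOpen (T : Set H) := Subgroup.isOpen_mono le_sup_right W.isOpen
  haveI : Finite (H ⧸ T) := T.quotient_finite_of_isOpen hTopen
  haveI : Finite (H ⧸ W.toSubgroup) := W.toSubgroup.quotient_finite_of_isOpen W.isOpen
  have hTidx : ∀ p : ℕ, p.Prime → p ∣ T.index → p ∈ π :=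
    hLpi T le_sup_left inferInstance hTopen
  haveI : (T.map (QuotientGroup.mk' W.toSubgroup)).Normal :=
    Subgroup.Normal.map inferInstance _ (QuotientGroup.mk'_surjective _)
  have h2 : piGen π (H ⧸ W.toSubgroup) ≤ T.map (QuotientGroup.mk' W.toSubgroup) := by
    apply piGen_le_normal
    · exact Subgroup.index_ne_zero_of_finite
    · intro p hp hpd
      exact hTidx p hp (hpd.trans (T.index_map_dvd (QuotientGroup.mk'_surjective _)))
  calc DW π W ≤ (T.map (QuotientGroup.mk' W.toSubgroup)).comap (QuotientGroup.mk' W.toSubgroup) :=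
        Subgroup.comap_mono h2
    _ = T := by
        rw [Subgroup.comap_map_eq, QuotientGroup.ker_mk', sup_eq_left.mpr le_sup_right]

lemma iInf_DW_le {x : H} (hx : ∀ W : OpenNormalSubgroup H, x ∈ DW π W) :
    x ∈ piResidual π H := by
  rw [piResidual, Subgroup.mem_iInf]
  intro L
  rw [Subgroup.mem_iInf]
  rintro ⟨hLn, hLc, hLpi⟩
  haveI := hLn
  by_contra hxL
  obtain ⟨W, hxT⟩ := exists_openNormal_avoid L hLc hxL
  exact hxT (DW_le_sup π L hLpi W (hx W))

lemma DW_mono {W W' : OpenNormalSubgroup H} (h : W ≤ W') : DW π W ≤ DW π W' := by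
  intro x hx
  have hle : W.toSubgroup ≤ (W'.toSubgroup).comap (MonoidHom.id H) := fun a ha => h ha
  set f := QuotientGroup.map W.toSubgroup W'.toSubgroup (MonoidHom.id H) hle with hf
  have hx' : QuotientGroup.mk x ∈ piGen π (H ⧸ W.toSubgroup) := hx
  have h2 := piGen_le_comap π f hx'
  rw [Subgroup.mem_comap] at h2
  show QuotientGroup.mk x ∈ piGen π (H ⧸ W'.toSubgroup)
  rwa [hf, QuotientGroup.map_mk] at h2

end Profinite
/-- Proposition 2.5: if `φ : G → H` is a continuous injective homomorphism of
profinite groups with open image `K`, then there is a finite set of primes `π`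
such that for every set of primes `π*` containing `π` there is a continuous
injective homomorphism `G/O^{π*}(G) → H/O^{π*}(H)` with image
`K·O^{π*}(H)/O^{π*}(H)`. -/
theorem stmt_6 {G H : Type*}
    [Group G] [TopologicalSpace G] [IsTopologicalGroup G]
    [CompactSpace G] [T2Space G] [TotallyDisconnectedSpace G]
    [Group H] [TopologicalSpace H] [IsTopologicalGroup H]
    [CompactSpace H] [T2Space H] [TotallyDisconnectedSpace H]
    (φ : G →* H) (hφc : Continuous φ) (hφi : Function.Injective φ)
    (hφo : IsOpen (Set.range ⇑φ)) :
    ∃ π : Set ℕ, π.Finite ∧ (∀ p ∈ π, p.Prime) ∧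
      ∀ π' : Set ℕ, π ⊆ π' →
        ∃ ψ : G ⧸ piResidual π' G →* H ⧸ piResidual π' H,
          Continuous ψ ∧ Function.Injective ψ ∧
            ψ.range = φ.range.map (QuotientGroup.mk' (piResidual π' H)) := by
  classical
  have hKopen : IsOpen ((φ.range : Subgroup H) : Set H) := by
    rw [MonoidHom.coe_range]; exact hφo
  haveI hfinK : Finite (H ⧸ φ.range) := φ.range.quotient_finite_of_isOpen hKopen
  haveI : φ.range.FiniteIndex := φ.range.finiteIndex_of_finite_quotient
  haveI : φ.range.normalCore.FiniteIndex := inferInstance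
  have hNc0 : φ.range.normalCore.index ≠ 0 := Subgroup.FiniteIndex.index_ne_zero
  refine ⟨{p : ℕ | p.Prime ∧ p ∣ φ.range.normalCore.index}, ?_, fun p hp => hp.1, ?_⟩
  · exact Set.Finite.subset (Set.finite_Iic φ.range.normalCore.index)
      fun p hp => Nat.le_of_dvd (Nat.pos_of_ne_zero hNc0) hp.2
  intro π' hππ'
  -- Direction 2 : the comap of the residual is below every member of the defining family of G
  have hdir2 : ∀ L ∈ {L : Subgroup G | L.Normal ∧ IsClosed (L : Set G) ∧ IsProPiQuot π' L},
      (piResidual π' H).comap φ ≤ L := by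
    rintro L ⟨hLn, hLc, hLpi⟩
    haveI := hLn
    intro g hg
    rw [Subgroup.mem_comap] at hg
    by_contra hgL
    obtain ⟨V, hxV⟩ := exists_openNormal_avoid L hLc hgL
    set A := L ⊔ V.toSubgroup with hA
    haveI : A.Normal := Subgroup.sup_normal L V.toSubgroup
    have hAopen : IsOpen (A : Set G) := Subgroup.isOpen_mono le_sup_right V.isOpen
    haveI : Finite (G ⧸ A) := A.quotient_finite_of_isOpen hAopen
    have hAidx : ∀ p : ℕ, p.Prime → p ∣ A.index → p ∈ π' :=
      hLpi A le_sup_left inferInstance hAopen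
    have hA0 : A.index ≠ 0 := Subgroup.index_ne_zero_of_finite
    set C := A.map φ with hC
    have hCK : C ≤ φ.range := Subgroup.map_le_range φ A
    have hgC : φ g ∉ C := by
      intro hmem
      obtain ⟨a, haA, hag⟩ := Subgroup.mem_map.mp hmem
      exact hxV (hφi hag ▸ haA)
    have hCopen : IsOpen (C : Set H) := by
      have himg : (C : Set H) = Set.range φ ∩ (φ '' ((A : Set G)ᶜ))ᶜ := by
        rw [hC, Subgroup.coe_map]
        ext y
        constructor
        · rintro ⟨a, haA, rfl⟩
          refine ⟨⟨a, rfl⟩, ?_⟩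
          rintro ⟨b, hbA, hba⟩
          exact hbA (by rw [show b = a from hφi hba]; exact haA)
        · rintro ⟨⟨a, rfl⟩, hy⟩
          by_cases haA : a ∈ (A : Set G)
          · exact ⟨a, haA, rfl⟩
          · exact absurd ⟨a, haA, rfl⟩ hy
      rw [himg]
      have hcpt : IsCompact (φ '' ((A : Set G)ᶜ)) :=
        ((hAopen.isClosed_compl).isCompact).image hφc
      exact hφo.inter hcpt.isClosed.isOpen_compl
    have hCclosed : IsClosed (C : Set H) := Subgroup.isClosed_of_isOpen C hCopen
    obtain ⟨W, hWC⟩ := IsTopologicalGroup.exist_openNormalSubgroup_sub_clopen_nhds_of_one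
      ⟨hCclosed, hCopen⟩ C.one_mem
    have hWC' : W.toSubgroup ≤ C := fun w hw => hWC hw
    haveI : Finite (H ⧸ W.toSubgroup) := W.toSubgroup.quotient_finite_of_isOpen W.isOpen
    set mkW := QuotientGroup.mk' W.toSubgroup with hmkW
    have hrel1 : C.relIndex φ.range = A.index := by
      have h2 := Subgroup.relIndex_comap (H := C) φ (⊤ : Subgroup G)
      rw [Subgroup.relIndex_top_right, ← MonoidHom.range_eq_map] at h2
      rw [← h2, hC, Subgroup.comap_map_eq, (MonoidHom.ker_eq_bot_iff φ).mpr hφi, sup_bot_eq]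
    have hrel2 : (C.map mkW).relIndex (φ.range.map mkW) = A.index := by
      have h3 := Subgroup.relIndex_comap (H := C.map mkW) mkW φ.range
      rw [Subgroup.comap_map_eq, QuotientGroup.ker_mk', sup_eq_left.mpr hWC'] at h3
      rw [← h3, hrel1]
    haveI : ((φ.range.normalCore).map mkW).Normal :=
      Subgroup.Normal.map inferInstance _ (QuotientGroup.mk'_surjective _)
    have hkey : piGen π' (H ⧸ W.toSubgroup) ≤ C.map mkW := by
      apply piGen_le_of_rel π' ((φ.range.normalCore).map mkW) (φ.range.map mkW) (C.map mkW)
      · exact Subgroup.index_ne_zero_of_finite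
      · intro p hp hpd
        exact hππ' ⟨hp,
          hpd.trans ((φ.range.normalCore).index_map_dvd (QuotientGroup.mk'_surjective _))⟩
      · exact Subgroup.map_mono (Subgroup.normalCore_le _)
      · intro k hk c hc
        obtain ⟨κ, hκ, rfl⟩ := Subgroup.mem_map.mp hk
        obtain ⟨c₀, hc₀, rfl⟩ := Subgroup.mem_map.mp hc
        obtain ⟨γ, rfl⟩ := hκ
        refine Subgroup.mem_map.mpr ⟨(φ γ) * c₀ * (φ γ)⁻¹, ?_, by simp⟩
        obtain ⟨a, haA, rfl⟩ := Subgroup.mem_map.mp hc₀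
        exact Subgroup.mem_map.mpr
          ⟨γ * a * γ⁻¹, ‹A.Normal›.conj_mem a haA γ, by simp⟩
      · rw [hrel2]; exact hA0
      · intro p hp hpd; rw [hrel2] at hpd; exact hAidx p hp hpd
    have hg2 : φ g ∈ DW π' W := resid_le_DW π' W hg
    have hg3 : mkW (φ g) ∈ C.map mkW := hkey (Subgroup.mem_comap.mp hg2)
    have hg4 : φ g ∈ (C.map mkW).comap mkW := Subgroup.mem_comap.mpr hg3
    rw [Subgroup.comap_map_eq, QuotientGroup.ker_mk', sup_eq_left.mpr hWC'] at hg4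
    exact hgC hg4
  -- Direction 1
  have hdir1 : IsProPiQuot π' ((piResidual π' H).comap φ) := by
    intro M hM hMn hMo p hp hpd
    have hcover : ((M : Set G))ᶜ ⊆
        ⋃ W : OpenNormalSubgroup H, (((DW π' W).comap φ : Subgroup G) : Set G)ᶜ := by
      intro g hg
      by_contra hgc
      simp only [Set.mem_iUnion, Set.mem_compl_iff, not_exists, not_not,
        SetLike.mem_coe] at hgc
      apply hg
      show g ∈ (M : Set G)
      have hgmem : g ∈ (piResidual π' H).comap φ := by
        rw [Subgroup.mem_comap]
        exact iInf_DW_le π' fun W => Subgroup.mem_comap.mp (hgc W)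
      exact hM hgmem
    have hMc : IsCompact ((M : Set G))ᶜ := (hMo.isClosed_compl).isCompact
    obtain ⟨t, ht⟩ := hMc.elim_finite_subcover
      (fun W : OpenNormalSubgroup H => (((DW π' W).comap φ : Subgroup G) : Set G)ᶜ)
      (fun W => by
        have hcl : IsClosed (((DW π' W).comap φ : Subgroup G) : Set G) := by
          rw [Subgroup.coe_comap]
          exact (Subgroup.isClosed_of_isOpen _ (DW_isOpen π' W)).preimage hφc
        exact hcl.isOpen_compl) hcover
    rcases t.eq_empty_or_nonempty with rfl | hne
    · have hempty : ((M : Set G))ᶜ = ∅ := by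
        apply Set.eq_empty_iff_forall_notMem.mpr
        intro g hg
        have := ht hg
        simp at this
      have hMtop : M = ⊤ := by
        rw [Subgroup.eq_top_iff']
        intro g
        by_contra hgM
        exact Set.eq_empty_iff_forall_notMem.mp hempty g hgM
      rw [hMtop, Subgroup.index_top] at hpd
      exact absurd (Nat.dvd_one.mp hpd) hp.ne_one
    · set W₀ := t.inf' hne id with hW₀
      have hfinal : (DW π' W₀).comap φ ≤ M := by
        intro g hg
        by_contra hgM
        have hgm : g ∈ ((M : Set G))ᶜ := hgM
        have := ht hgm
        simp only [Set.mem_iUnion, Set.mem_compl_iff, SetLike.mem_coe] at this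
        obtain ⟨Wi, hWit, hgWi⟩ := this
        apply hgWi
        exact Subgroup.comap_mono (DW_mono π' (Finset.inf'_le id hWit)) hg
      haveI : Finite (H ⧸ W₀.toSubgroup) := W₀.toSubgroup.quotient_finite_of_isOpen W₀.isOpen
      have hchain : p ∣ (piGen π' (H ⧸ W₀.toSubgroup)).index := by
        refine hpd.trans ?_
        calc M.index ∣ ((DW π' W₀).comap φ).index := Subgroup.index_dvd_of_le hfinal
          _ = (DW π' W₀).relIndex φ.range := (DW π' W₀).index_comap φ
          _ ∣ (DW π' W₀).index := Subgroup.relIndex_dvd_index_of_normal (DW π' W₀) φ.range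
          _ = _ := DW_index π' W₀
      exact piGen_index π' p hp hchain
  have hOHclosed : IsClosed ((piResidual π' H : Subgroup H) : Set H) := by
    rw [piResidual]
    simp only [Subgroup.coe_iInf]
    exact isClosed_iInter fun L => isClosed_iInter fun hL => hL.2.1
  have hfam : (piResidual π' H).comap φ ∈
      {L : Subgroup G | L.Normal ∧ IsClosed (L : Set G) ∧ IsProPiQuot π' L} := by
    refine ⟨Subgroup.normal_comap φ, ?_, hdir1⟩
    rw [Subgroup.coe_comap]
    exact hOHclosed.preimage hφc
  have hle1 : piResidual π' G ≤ (piResidual π' H).comap φ := biInf_le _ hfam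
  have hle2 : (piResidual π' H).comap φ ≤ piResidual π' G :=
    le_iInf fun L => le_iInf fun hL => hdir2 L hL
  refine ⟨QuotientGroup.map _ _ φ hle1, ?_, ?_, ?_⟩
  · rw [(QuotientGroup.isQuotientMap_mk (piResidual π' G)).continuous_iff]
    have heq : (QuotientGroup.map (piResidual π' G) (piResidual π' H) φ hle1) ∘ QuotientGroup.mk
        = QuotientGroup.mk ∘ φ := funext fun g => rfl
    rw [heq]
    exact QuotientGroup.continuous_mk.comp hφc
  · intro a b hab
    obtain ⟨x, rfl⟩ := QuotientGroup.mk_surjective a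
    obtain ⟨y, rfl⟩ := QuotientGroup.mk_surjective b
    rw [QuotientGroup.map_mk, QuotientGroup.map_mk] at hab
    rw [QuotientGroup.eq] at hab ⊢
    exact hle2 (by rw [Subgroup.mem_comap, map_mul, map_inv]; exact hab)
  · ext q
    simp only [MonoidHom.mem_range]
    constructor
    · rintro ⟨x, rfl⟩
      obtain ⟨g, rfl⟩ := QuotientGroup.mk_surjective x
      rw [QuotientGroup.map_mk]
      exact Subgroup.mem_map.mpr ⟨φ g, ⟨g, rfl⟩, rfl⟩
    · intro hq
      obtain ⟨y, hy, rfl⟩ := Subgroup.mem_map.mp hq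
      obtain ⟨g, rfl⟩ := hy
      exact ⟨QuotientGroup.mk g, by rw [QuotientGroup.map_mk]; rfl⟩
end

section
/- Let G be a profinite group and H an open subgroup of G such that there is no continuous injective homomorphism from G onto an open subgroup of H. Then there exists an open normal subgroup K of G with G/K simple such that there is no continuous injective homomorphism from G onto an open subgroup of K. -/
/-- `Hom_o(G, H)` is nonempty: there is a continuous injective homomorphism
from `G` to (the subtype group of) `H` with open image. -/
def HomONonempty {G : Type*} [Group G] [TopologicalSpace G]
    (H : Subgroup G) : Prop :=
  ∃ φ : G →* ↥H, Continuous φ ∧ Function.Injective φ ∧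
    IsOpen (Set.range ⇑φ)

/-- Reformulation of `HomONonempty` as a self-map of `G` with range inside `H`. -/
def HomO {G : Type*} [Group G] [TopologicalSpace G] (H : Subgroup G) : Prop :=
  ∃ f : G →* G, Continuous f ∧ Function.Injective f ∧ IsOpen (Set.range ⇑f) ∧
    Set.range ⇑f ⊆ (H : Set G)

section helpers

variable {G : Type*} [Group G] [TopologicalSpace G]

lemma homONonempty_iff {H : Subgroup G} (hH : IsOpen (H : Set G)) :
    HomONonempty H ↔ HomO H := by
  constructor
  · rintro ⟨φ, hc, hi, ho⟩
    refine ⟨H.subtype.comp φ, continuous_subtype_val.comp hc,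
      Subtype.val_injective.comp hi, ?_, ?_⟩
    · have hre : Set.range ⇑(H.subtype.comp φ) = Subtype.val '' Set.range ⇑φ := by
        rw [MonoidHom.coe_comp, Set.range_comp]; rfl
      rw [hre]
      exact hH.isOpenMap_subtype_val _ ho
    · rintro _ ⟨g, rfl⟩; exact (φ g).2
  · rintro ⟨f, hc, hi, ho, hr⟩
    refine ⟨f.codRestrict H (fun g => hr ⟨g, rfl⟩), hc.subtype_mk _, ?_, ?_⟩
    · intro a b hab
      exact hi (congrArg Subtype.val hab)
    · have hre : Set.range ⇑(f.codRestrict H (fun g => hr ⟨g, rfl⟩)) =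
          Subtype.val ⁻¹' Set.range ⇑f := by
        ext x
        constructor
        · rintro ⟨g, rfl⟩; exact ⟨g, rfl⟩
        · rintro ⟨g, hg⟩; exact ⟨g, Subtype.ext hg⟩
      rw [hre]
      exact ho.preimage continuous_subtype_val

lemma image_open [CompactSpace G] [T2Space G] {f : G →* G} (hc : Continuous f)
    (hi : Function.Injective f) (ho : IsOpen (Set.range ⇑f)) {U : Set G} (hU : IsOpen U) :
    IsOpen (⇑f '' U) := by
  have hoe : Topology.IsOpenEmbedding ⇑f := ⟨(hc.isClosedEmbedding hi).toIsEmbedding, ho⟩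
  exact hoe.isOpenMap U hU

lemma mulEquiv_isSimpleGroup {A B : Type*} [Group A] [Group B] (e : A ≃* B)
    (h : IsSimpleGroup A) : IsSimpleGroup B := by
  haveI := h
  haveI : Nontrivial B := e.symm.toEquiv.nontrivial
  refine ⟨fun H hH => ?_⟩
  have hc : (H.comap e.toMonoidHom).Normal := hH.comap _
  have hmap : (H.comap e.toMonoidHom).map e.toMonoidHom = H :=
    Subgroup.map_comap_eq_self_of_surjective e.surjective H
  rcases h.eq_bot_or_eq_top_of_normal _ hc with h' | h'
  · left; rw [← hmap, h', Subgroup.map_bot]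
  · right; rw [← hmap, h', Subgroup.map_top_of_surjective _ e.surjective]

lemma pullback_simple {G' : Type*} [Group G'] (N : Subgroup G') [N.Normal]
    (M' : Subgroup (G' ⧸ N)) (hM' : M'.Normal) (hs : IsSimpleGroup ((G' ⧸ N) ⧸ M')) :
    ∃ K : Subgroup G', ∃ _ : K.Normal, N ≤ K ∧ IsSimpleGroup (G' ⧸ K) := by
  refine ⟨M'.comap (QuotientGroup.mk' N), hM'.comap _, ?_, ?_⟩
  · intro x hx
    have h1 : (QuotientGroup.mk' N) x = 1 := (QuotientGroup.eq_one_iff x).mpr hx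
    rw [Subgroup.mem_comap, h1]
    exact one_mem M'
  · have hle : N ≤ M'.comap (QuotientGroup.mk' N) := by
      intro x hx
      have h1 : (QuotientGroup.mk' N) x = 1 := (QuotientGroup.eq_one_iff x).mpr hx
      rw [Subgroup.mem_comap, h1]
      exact one_mem M'
    haveI hKn : (M'.comap (QuotientGroup.mk' N)).Normal := hM'.comap _
    have hmap : (M'.comap (QuotientGroup.mk' N)).map (QuotientGroup.mk' N) = M' :=
      Subgroup.map_comap_eq_self_of_surjective (QuotientGroup.mk'_surjective N) M'
    haveI : ((M'.comap (QuotientGroup.mk' N)).map (QuotientGroup.mk' N)).Normal := by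
      rw [hmap]; exact hM'
    have e := QuotientGroup.quotientQuotientEquivQuotient N
      (M'.comap (QuotientGroup.mk' N)) hle
    exact mulEquiv_isSimpleGroup e
      (mulEquiv_isSimpleGroup (QuotientGroup.quotientMulEquivOfEq hmap.symm) hs)

/-- Every finite nontrivial group has a normal subgroup with simple quotient. -/
lemma exists_normal_simple_quotient :
    ∀ (n : ℕ) (Q : Type*) [Group Q] [Finite Q] [Nontrivial Q], Nat.card Q ≤ n →
      ∃ M : Subgroup Q, ∃ _ : M.Normal, IsSimpleGroup (Q ⧸ M) := by
  intro n
  induction n with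
  | zero =>
    intro Q _ _ _ h
    have := Nat.card_pos (α := Q)
    omega
  | succ n ih =>
    intro Q _ _ _ hcard
    by_cases hs : IsSimpleGroup Q
    · exact ⟨⊥, inferInstance,
        mulEquiv_isSimpleGroup (QuotientGroup.quotientBot (G := Q)).symm hs⟩
    · have hex : ∃ N : Subgroup Q, N.Normal ∧ ¬(N = ⊥ ∨ N = ⊤) := by
        by_contra hh
        push_neg at hh
        exact hs ⟨fun H hH => hh H hH⟩
      obtain ⟨N, hNn, hN⟩ := hex
      push_neg at hN
      obtain ⟨hNbot, hNtop⟩ := hN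
      haveI := hNn
      have hnt : Nontrivial (Q ⧸ N) := by
        obtain ⟨x, hx⟩ : ∃ x, x ∉ N := by
          by_contra hh
          push_neg at hh
          exact hNtop ((Subgroup.eq_top_iff' N).mpr hh)
        exact ⟨⟨QuotientGroup.mk x, 1, by simpa [QuotientGroup.eq_one_iff] using hx⟩⟩
      have h1 : Nat.card Q = Nat.card (Q ⧸ N) * Nat.card N :=
        Subgroup.card_eq_card_quotient_mul_card_subgroup N
      have h2 : 1 < Nat.card ↥N := (Subgroup.one_lt_card_iff_ne_bot N).mpr hNbot
      have h3 : 0 < Nat.card (Q ⧸ N) := Nat.card_pos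
      have h4 : Nat.card (Q ⧸ N) * 2 ≤ Nat.card (Q ⧸ N) * Nat.card N :=
        Nat.mul_le_mul_left _ h2
      obtain ⟨M', hM'n, hM's⟩ := ih (Q ⧸ N) (by omega)
      obtain ⟨K, hKn, _, hKs⟩ := pullback_simple N M' hM'n hM's
      exact ⟨K, hKn, hKs⟩

variable [IsTopologicalGroup G] [CompactSpace G] [T2Space G]

lemma main_induction
    (hyp : ∀ K : Subgroup G, ∀ _ : K.Normal, IsOpen (K : Set G) → IsSimpleGroup (G ⧸ K) → HomO K) :
    ∀ (n : ℕ) (N : Subgroup G), N.Normal → IsOpen (N : Set G) → N.index ≤ n → HomO N := by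
  intro n
  induction n with
  | zero =>
    intro N _ hNo hle
    haveI := N.quotient_finite_of_isOpen hNo
    have := Subgroup.index_ne_zero_of_finite (H := N)
    omega
  | succ n ih =>
    intro N hNn hNo hle
    by_cases htop : N = ⊤
    · subst htop
      refine ⟨MonoidHom.id G, continuous_id, fun a b h => h, ?_, ?_⟩
      · have : Set.range ⇑(MonoidHom.id G) = Set.univ :=
          Set.eq_univ_of_forall fun x => ⟨x, rfl⟩
        rw [this]; exact isOpen_univ
      · exact fun x _ => Subgroup.mem_top x
    · haveI := hNn
      haveI hfin := N.quotient_finite_of_isOpen hNo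
      have hind : N.index ≠ 0 := Subgroup.index_ne_zero_of_finite
      haveI hnt : Nontrivial (G ⧸ N) := by
        obtain ⟨x, hx⟩ : ∃ x, x ∉ N := by
          by_contra hh
          push_neg at hh
          exact htop ((Subgroup.eq_top_iff' N).mpr hh)
        exact ⟨⟨QuotientGroup.mk x, 1, by simpa [QuotientGroup.eq_one_iff] using hx⟩⟩
      obtain ⟨M', hM'n, hM's⟩ :=
        exists_normal_simple_quotient (Nat.card (G ⧸ N)) (G ⧸ N) le_rfl
      obtain ⟨M, hMn, hNM, hMs⟩ := pullback_simple N M' hM'n hM's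
      have hMo : IsOpen (M : Set G) := Subgroup.isOpen_mono hNM hNo
      obtain ⟨f, fc, fi, fo, fr⟩ := hyp M hMn hMo hMs
      -- index arithmetic
      have hrel := Subgroup.relIndex_mul_index hNM
      haveI hfinM := M.quotient_finite_of_isOpen hMo
      haveI := hMs
      have h2M : 1 < M.index := by
        rw [Subgroup.index_eq_card]
        exact Finite.one_lt_card
      have hrel0 : N.relIndex M ≠ 0 := by
        intro h
        rw [h, zero_mul] at hrel
        exact hind hrel.symm
      have hlt : N.relIndex M < N.index := by
        have hh : N.relIndex M * 2 ≤ N.index := by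
          calc N.relIndex M * 2 ≤ N.relIndex M * M.index := Nat.mul_le_mul_left _ h2M
            _ = N.index := hrel
        omega
      have hfR : f.range ≤ M := by
        intro x hx
        obtain ⟨g, rfl⟩ := MonoidHom.mem_range.mp hx
        exact fr ⟨g, rfl⟩
      have hN'i : (N.comap f).index = N.relIndex f.range := Subgroup.index_comap N f
      have hle2 : N.relIndex f.range ≤ N.relIndex M :=
        Subgroup.relIndex_le_of_le_right hfR hrel0
      have hN'o : IsOpen ((N.comap f : Subgroup G) : Set G) := by
        rw [Subgroup.coe_comap]
        exact hNo.preimage fc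
      obtain ⟨g, gc, gi, go, gr⟩ := ih (N.comap f) (hNn.comap f) hN'o (by omega)
      refine ⟨f.comp g, fc.comp gc, fi.comp gi, ?_, ?_⟩
      · rw [MonoidHom.coe_comp, Set.range_comp]
        exact image_open fc fi fo go
      · rintro _ ⟨y, rfl⟩
        have hy : g y ∈ N.comap f := gr ⟨y, rfl⟩
        exact hy

end helpers

/-- Proposition 2.7: if `H` is an open subgroup of a profinite group `G` with
`Hom_o(G,H) = ∅`, then there is an open normal subgroup `K` of `G` with `G/K`
simple and `Hom_o(G,K) = ∅`. -/
theorem stmt_7 {G : Type*} [Group G] [TopologicalSpace G] [IsTopologicalGroup G]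
    [CompactSpace G] [T2Space G] [TotallyDisconnectedSpace G]
    (H : Subgroup G) (hH : IsOpen (H : Set G)) (hno : ¬ HomONonempty H) :
    ∃ K : Subgroup G, ∃ _ : K.Normal, IsOpen (K : Set G) ∧
      IsSimpleGroup (G ⧸ K) ∧ ¬ HomONonempty K := by
  by_contra hcon
  push_neg at hcon
  apply hno
  rw [homONonempty_iff hH]
  have hyp : ∀ K : Subgroup G, ∀ _ : K.Normal, IsOpen (K : Set G) → IsSimpleGroup (G ⧸ K) → HomO K := by
    intro K hKn hKo hKs
    rw [← homONonempty_iff hKo]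
    exact hcon K hKn hKo hKs
  -- `H.normalCore` is an open normal subgroup contained in `H`.
  haveI hfin := H.quotient_finite_of_isOpen hH
  haveI : H.FiniteIndex := H.finiteIndex_of_finite_quotient
  have hNo : IsOpen ((H.normalCore : Subgroup G) : Set G) :=
    Subgroup.isOpen_of_isClosed_of_finiteIndex _
      (H.normalCore_isClosed (H.isClosed_of_isOpen hH))
  obtain ⟨f, fc, fi, fo, fr⟩ :=
    main_induction hyp (H.normalCore).index H.normalCore inferInstance hNo le_rfl
  exact ⟨f, fc, fi, fo, fun x hx => H.normalCore_le (fr hx)⟩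
end

section
/- Let G be a profinite group of type (F) such that every open subgroup of G contains a normal subgroup N of G with N topologically isomorphic to G. Then G is abelian. -/
/-- A profinite group is of type (F) if it has only finitely many open
subgroups of each index. -/
def TypeF (G : Type*) [Group G] [TopologicalSpace G] : Prop :=
  ∀ n : ℕ, {H : Subgroup G | IsOpen (H : Set G) ∧ H.index = n}.Finite

section Aux

variable {G : Type*} [Group G] [TopologicalSpace G]

/-- The intersection of all open subgroups of index at most `m`. -/
private def JJ (G : Type*) [Group G] [TopologicalSpace G] (m : ℕ) : Subgroup G :=
  sInf {L : Subgroup G | IsOpen (L : Set G) ∧ L.index ≤ m}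

private lemma JJ_le {m : ℕ} {L : Subgroup G} (h1 : IsOpen (L : Set G)) (h2 : L.index ≤ m) :
    JJ G m ≤ L := sInf_le ⟨h1, h2⟩

private lemma finite_S (hF : TypeF G) (m : ℕ) :
    {L : Subgroup G | IsOpen (L : Set G) ∧ L.index ≤ m}.Finite := by
  apply Set.Finite.subset (Set.Finite.biUnion (Set.finite_Iic m)
    (fun i _ => hF i))
  intro L hL
  exact Set.mem_biUnion hL.2 ⟨hL.1, rfl⟩

private lemma JJ_isOpen (hF : TypeF G) (m : ℕ) : IsOpen ((JJ G m : Subgroup G) : Set G) := by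
  rw [JJ, Subgroup.coe_sInf]
  exact Set.Finite.isOpen_biInter (finite_S hF m) fun L hL => hL.1

private lemma JJ_mem_map {m : ℕ} (e' : G ≃* G) (hc : Continuous e') {u : G}
    (hu : u ∈ JJ G m) : e' u ∈ JJ G m := by
  rw [JJ, Subgroup.mem_sInf] at hu ⊢
  intro L hL
  have h1 : IsOpen ((L.comap e'.toMonoidHom : Subgroup G) : Set G) := by
    rw [Subgroup.coe_comap]
    exact hL.1.preimage hc
  have h2 : (L.comap e'.toMonoidHom).index = L.index :=
    L.index_comap_of_surjective (EquivLike.surjective e')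
  exact Subgroup.mem_comap.mp (hu _ ⟨h1, h2.le.trans hL.2⟩)

end Aux

/-- Part of Proposition 2.8: a profinite group of type (F) in which every open
subgroup contains a normal subgroup of `G` topologically isomorphic to `G` is
abelian. -/
theorem stmt_8 {G : Type*} [Group G] [TopologicalSpace G] [IsTopologicalGroup G]
    [CompactSpace G] [T2Space G] [TotallyDisconnectedSpace G]
    (hF : TypeF G)
    (h : ∀ U : Subgroup G, IsOpen (U : Set G) →
      ∃ N : Subgroup G, N.Normal ∧ N ≤ U ∧
        ∃ e : G ≃* ↥N, Continuous e ∧ Continuous e.symm) :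
    ∀ a b : G, a * b = b * a := by
  intro a b
  by_contra hab
  set c : G := b * a * b⁻¹ * a⁻¹ with hc_def
  have hc : c ≠ 1 := by
    intro h1
    apply hab
    have h2 : b * a * b⁻¹ = a := mul_inv_eq_one.mp h1
    calc a * b = (b * a * b⁻¹) * b := by rw [h2]
    _ = b * a := by group
  -- find an open subgroup avoiding `c`
  obtain ⟨W, hWclopen, hW1, hWsub⟩ :=
    compact_exists_isClopen_in_isOpen (isOpen_compl_singleton (x := c))
      (Set.mem_compl_singleton_iff.mpr (Ne.symm hc))
  obtain ⟨K, hKW⟩ :=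
    IsTopologicalGroup.exist_openNormalSubgroup_sub_clopen_nhds_of_one hWclopen hW1
  set K' : Subgroup G := K.toOpenSubgroup.toSubgroup with hK'
  have hK'open : IsOpen (K' : Set G) := K.toOpenSubgroup.isOpen
  have hcK' : c ∉ K' := fun hmem => (hWsub (hKW hmem)) rfl
  set s : ℕ := K'.index with hs
  set Js : Subgroup G := JJ G s with hJs
  have hJsopen : IsOpen (Js : Set G) := JJ_isOpen hF s
  have hJsK : Js ≤ K' := JJ_le hK'open le_rfl
  haveI hfinQ : Finite (G ⧸ Js) := Subgroup.quotient_finite_of_isOpen Js hJsopen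
  set A : ℕ := Nat.card (Equiv.Perm (G ⧸ Js)) with hA
  obtain ⟨N, hNnorm, hNU, e, he, hesym⟩ := h (JJ G A) (JJ_isOpen hF A)
  haveI := hNnorm
  -- the conjugation action of `G` transported along `e`
  set α : G →* MulAut G :=
    ((MulAut.congr e.symm).toMonoidHom.comp MulAut.conjNormal) with hα
  have hαapp : ∀ g u : G, α g u = e.symm (MulAut.conjNormal (G := G) g (e u)) := by
    intro g u
    simp [hα, MulAut.congr]
  -- continuity of each α g
  have hαcont : ∀ g : G, Continuous (α g) := by
    intro g
    have h1 : Continuous fun x : ↥N => MulAut.conjNormal (G := G) g x := by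
      apply continuous_induced_rng.mpr
      have heq : (fun x : ↥N => ((MulAut.conjNormal (G := G) g x : ↥N) : G)) =
          fun x : ↥N => g * (x : G) * g⁻¹ := by
        funext x
        exact MulAut.conjNormal_apply g x
      show Continuous fun x : ↥N => ((MulAut.conjNormal (G := G) g x : ↥N) : G)
      rw [heq]
      exact (continuous_const.mul continuous_subtype_val).mul continuous_const
    have heq2 : ⇑(α g) = (⇑e.symm) ∘ (fun x : ↥N => MulAut.conjNormal (G := G) g x) ∘ ⇑e := by
      funext u
      exact hαapp g u
    rw [heq2]
    exact hesym.comp (h1.comp he)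
  have hpres : ∀ (g : G) {u : G}, u ∈ JJ G s → α g u ∈ JJ G s := by
    intro g u hu
    exact JJ_mem_map (α g) (hαcont g) hu
  -- the induced permutation action on the finite coset space G ⧸ Js
  have hwd : ∀ (g : G) (u v : G), u⁻¹ * v ∈ Js →
      (QuotientGroup.mk (α g u) : G ⧸ Js) = QuotientGroup.mk (α g v) := by
    intro g u v huv
    rw [QuotientGroup.eq]
    have hrw : (α g u)⁻¹ * α g v = α g (u⁻¹ * v) := by
      rw [map_mul, map_inv]
    rw [hrw]
    exact hpres g huv
  set Qmap : G → G ⧸ Js → G ⧸ Js := fun g q =>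
    Quotient.liftOn' q (fun u => (QuotientGroup.mk (α g u) : G ⧸ Js))
      (fun u v huv => hwd g u v (QuotientGroup.leftRel_apply.mp huv)) with hQmap
  have hQmk : ∀ (g u : G), Qmap g (QuotientGroup.mk u) = QuotientGroup.mk (α g u) :=
    fun g u => rfl
  have hQcomp : ∀ (g₁ g₂ : G) (q : G ⧸ Js), Qmap g₁ (Qmap g₂ q) = Qmap (g₁ * g₂) q := by
    intro g₁ g₂ q
    refine QuotientGroup.induction_on q ?_
    intro u
    rw [hQmk, hQmk, hQmk]
    congr 1
    rw [map_mul]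
    rfl
  have hQid : ∀ q : G ⧸ Js, Qmap 1 q = q := by
    intro q
    refine QuotientGroup.induction_on q ?_
    intro u
    rw [hQmk, map_one]
    rfl
  set Ψ : G →* Equiv.Perm (G ⧸ Js) := MonoidHom.mk'
    (fun g => ⟨Qmap g, Qmap g⁻¹,
      fun q => by rw [hQcomp, inv_mul_cancel, hQid],
      fun q => by rw [hQcomp, mul_inv_cancel, hQid]⟩)
    (fun g₁ g₂ => Equiv.ext fun q => by
      show Qmap (g₁ * g₂) q = _
      rw [Equiv.Perm.mul_apply]
      exact (hQcomp g₁ g₂ q).symm) with hΨ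
  have hΨapp : ∀ (g : G) (q : G ⧸ Js), Ψ g q = Qmap g q := fun g q => rfl
  -- kernel description
  have hker : ∀ g : G, g ∈ Ψ.ker ↔ ∀ u : G, (α g u)⁻¹ * u ∈ Js := by
    intro g
    rw [MonoidHom.mem_ker]
    constructor
    · intro h1 u
      have h2 : Ψ g (QuotientGroup.mk u) = QuotientGroup.mk u := by rw [h1]; rfl
      rw [hΨapp, hQmk] at h2
      exact QuotientGroup.eq.mp h2
    · intro h1
      apply Equiv.ext
      intro q
      refine QuotientGroup.induction_on q ?_
      intro u
      show Qmap g (QuotientGroup.mk u) = QuotientGroup.mk u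
      rw [hQmk]
      exact QuotientGroup.eq.mpr (h1 u)
  -- the kernel is closed
  have hkerclosed : IsClosed ((Ψ.ker : Subgroup G) : Set G) := by
    have heq : ((Ψ.ker : Subgroup G) : Set G) =
        ⋂ u : G, (fun g : G => (α g u)⁻¹ * u) ⁻¹' (Js : Set G) := by
      ext g
      simp only [Set.mem_iInter, Set.mem_preimage, SetLike.mem_coe]
      exact hker g
    rw [heq]
    refine isClosed_iInter fun u => IsClosed.preimage ?_ (Subgroup.isClosed_of_isOpen Js hJsopen)
    have h1 : Continuous fun g : G => ((MulAut.conjNormal (G := G) g (e u) : ↥N) : G) := by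
      have heq1 : (fun g : G => ((MulAut.conjNormal (G := G) g (e u) : ↥N) : G)) =
          fun g : G => g * ((e u : G)) * g⁻¹ := by
        funext g
        exact MulAut.conjNormal_apply g (e u)
      rw [heq1]
      exact (continuous_id.mul continuous_const).mul continuous_inv
    have h2 : Continuous fun g : G => MulAut.conjNormal (G := G) g (e u) :=
      continuous_induced_rng.mpr h1
    have h3 : Continuous fun g : G => α g u := by
      have heq3 : (fun g : G => α g u) =
          fun g : G => e.symm (MulAut.conjNormal (G := G) g (e u)) := by
        funext g
        exact hαapp g u
      rw [heq3]
      exact hesym.comp h2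
    exact (h3.inv).mul continuous_const
  -- the kernel has small index
  have hidx : Ψ.ker.index = Nat.card Ψ.range := Subgroup.index_ker Ψ
  have hle : Ψ.ker.index ≤ A := by
    rw [hidx, hA]
    exact Nat.card_le_card_of_injective _ Subtype.val_injective
  have hker0 : Ψ.ker.index ≠ 0 := by
    rw [hidx]
    exact Nat.card_pos.ne'
  haveI : Ψ.ker.FiniteIndex := ⟨hker0⟩
  have hkeropen : IsOpen ((Ψ.ker : Subgroup G) : Set G) :=
    Subgroup.isOpen_of_isClosed_of_finiteIndex Ψ.ker hkerclosed
  have hNker : N ≤ Ψ.ker := le_trans hNU (JJ_le hkeropen hle)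
  -- conclude commutators lie in Js
  have hcomm : ∀ u v : G, (v * u * v⁻¹)⁻¹ * u ∈ Js := by
    intro u v
    have hx : ((e v : G)) ∈ N := (e v).2
    have hk := (hker _).mp (hNker hx) u
    have hrw : α ((e v : G)) u = v * u * v⁻¹ := by
      rw [hαapp]
      have h4 : MulAut.conjNormal (G := G) ((e v : G)) (e u) = e (v * u * v⁻¹) := by
        apply Subtype.ext
        have h5 : ((MulAut.conjNormal (G := G) ((e v : G)) (e u) : ↥N) : G) =
            (e v : G) * (e u : G) * ((e v : G))⁻¹ := MulAut.conjNormal_apply _ _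
        rw [h5, map_mul, map_mul, map_inv]
        simp
      rw [h4, MulEquiv.symm_apply_apply]
    rw [hrw] at hk
    exact hk
  have hcJs : c ∈ Js := by
    have h6 := hcomm a⁻¹ b
    have heq : (b * a⁻¹ * b⁻¹)⁻¹ * a⁻¹ = c := by
      rw [hc_def]
      group
    rwa [heq] at h6
  exact hcK' (hJsK hcJs)
end

section
/- Let G be a profinite group and Λ a semigroup of continuous endomorphisms of G. Let K be a closed subgroup of G. Then Con(Λ,K) is a subgroup of G, and if K is normal in G then Con(Λ,K) is normal in G. -/
open Pointwise

/-- The set `Λξ = { λ ∘ ξ | λ ∈ Λ }`. -/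
def lamComp {G : Type*} [Group G] (Λ : Set (G →* G)) (ξ : G →* G) :
    Set (G →* G) :=
  (fun l => l.comp ξ) '' Λ

/-- `Con(Λ, K)`: the set of `x ∈ G` such that for every open set `O ⊇ K` there
is a member `Σ` of the filter generated by the sets `⋂_{ξ ∈ Ξ} Λξ` (`Ξ ⊆ Λ`
finite) with `σ(x) ∈ O` for all `σ ∈ Σ`. -/
def conSet {G : Type*} [Group G] [TopologicalSpace G] (Λ : Set (G →* G))
    (K : Set G) : Set G :=
  {x : G | ∀ O : Set G, IsOpen O → K ⊆ O →
    ∃ S' : Set (G →* G),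
      (∃ Ξ : Finset (G →* G), ↑Ξ ⊆ Λ ∧ (⋂ ξ ∈ Ξ, lamComp Λ ξ) ⊆ S') ∧
      ∀ σ ∈ S', σ x ∈ O}

/-- In a profinite group, every open set containing a closed subgroup `K`
contains an open subgroup containing `K`, which can be taken normal if `K` is
normal. -/
lemma exists_openSubgroup_between {G : Type*} [Group G] [TopologicalSpace G]
    [IsTopologicalGroup G] [CompactSpace G] [T2Space G]
    [TotallyDisconnectedSpace G] (K : Subgroup G) (hK : IsClosed (K : Set G))
    {O : Set G} (hO : IsOpen O) (hKO : (K : Set G) ⊆ O) :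
    ∃ U : Subgroup G, IsOpen (U : Set G) ∧ K ≤ U ∧ (U : Set G) ⊆ O ∧
      (K.Normal → U.Normal) := by
  have hKc : IsCompact (K : Set G) := hK.isCompact
  obtain ⟨V, hV, hKV⟩ := compact_open_separated_mul_right hKc hO hKO
  obtain ⟨W, hWV, hWopen, h1W⟩ := mem_nhds_iff.mp hV
  obtain ⟨C, hCclopen, h1C, hCW⟩ := compact_exists_isClopen_in_isOpen hWopen h1W
  obtain ⟨N, hN⟩ :=
    IsTopologicalGroup.exist_openNormalSubgroup_sub_clopen_nhds_of_one hCclopen h1C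
  refine ⟨K ⊔ N.toSubgroup, ?_, le_sup_left, ?_, ?_⟩
  · exact Subgroup.isOpen_mono le_sup_right N.isOpen
  · have : (↑(K ⊔ N.toSubgroup) : Set G) = (K : Set G) * (N.toSubgroup : Set G) :=
      Subgroup.mul_normal K N.toSubgroup
    rw [this]
    intro z hz
    obtain ⟨a, ha, b, hb, rfl⟩ := hz
    exact hKV (Set.mul_mem_mul ha (hWV (hCW (hN hb))))
  · intro hKn
    haveI := hKn
    exact Subgroup.sup_normal K N.toSubgroup

/-- Lemma 3.3(i): `Con(Λ,K)` is a subgroup of `G`, normal whenever `K` is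
normal, for `Λ` a semigroup of continuous endomorphisms and `K` a closed
subgroup of the profinite group `G`. -/
theorem stmt_10 {G : Type*} [Group G] [TopologicalSpace G] [IsTopologicalGroup G]
    [CompactSpace G] [T2Space G] [TotallyDisconnectedSpace G]
    (Λ : Set (G →* G)) (hcont : ∀ l ∈ Λ, Continuous l)
    (hsemi : ∀ l ∈ Λ, ∀ m ∈ Λ, l.comp m ∈ Λ)
    (K : Subgroup G) (hK : IsClosed (K : Set G)) :
    ∃ S : Subgroup G, (S : Set G) = conSet Λ (K : Set G) ∧
      (K.Normal → S.Normal) := by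
  classical
  refine ⟨{ carrier := conSet Λ (K : Set G)
            one_mem' := ?_
            mul_mem' := ?_
            inv_mem' := ?_ }, rfl, ?_⟩
  · rintro x y hx hy O hO hKO
    obtain ⟨U, hUopen, hKU, hUO, -⟩ := exists_openSubgroup_between K hK hO hKO
    obtain ⟨S₁, ⟨Ξ₁, hΞ₁, hsub₁⟩, hS₁⟩ := hx U hUopen hKU
    obtain ⟨S₂, ⟨Ξ₂, hΞ₂, hsub₂⟩, hS₂⟩ := hy U hUopen hKU
    refine ⟨S₁ ∩ S₂, ⟨Ξ₁ ∪ Ξ₂, ?_, ?_⟩, fun σ hσ => ?_⟩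
    · push_cast
      exact Set.union_subset hΞ₁ hΞ₂
    · intro σ hσ
      simp only [Set.mem_iInter, Finset.mem_union] at hσ
      exact ⟨hsub₁ (Set.mem_iInter₂.mpr fun ξ hξ => hσ ξ (Or.inl hξ)),
        hsub₂ (Set.mem_iInter₂.mpr fun ξ hξ => hσ ξ (Or.inr hξ))⟩
    · rw [map_mul]
      exact hUO (U.mul_mem (hS₁ σ hσ.1) (hS₂ σ hσ.2))
  · intro O hO hKO
    refine ⟨Set.univ, ⟨∅, by simp, by simp⟩, fun σ _ => ?_⟩
    simpa using hKO K.one_mem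
  · rintro x hx O hO hKO
    obtain ⟨U, hUopen, hKU, hUO, -⟩ := exists_openSubgroup_between K hK hO hKO
    obtain ⟨S₁, hF, hS₁⟩ := hx U hUopen hKU
    refine ⟨S₁, hF, fun σ hσ => ?_⟩
    rw [map_inv]
    exact hUO (U.inv_mem (hS₁ σ hσ))
  · intro hKn
    constructor
    intro x hx g O hO hKO
    obtain ⟨U, hUopen, hKU, hUO, hUn⟩ := exists_openSubgroup_between K hK hO hKO
    haveI := hUn hKn
    obtain ⟨S₁, hF, hS₁⟩ := hx U hUopen hKU
    refine ⟨S₁, hF, fun σ hσ => ?_⟩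
    simp only [map_mul, map_inv]
    exact hUO (Subgroup.Normal.conj_mem ‹U.Normal› _ (hS₁ σ hσ) (σ g))
end

section
/- Let G be a profinite group and φ a continuous endomorphism of G such that the set of φ-invariant open subgroups forms a neighbourhood base at the identity (e.g. G of type (F)). Then for every open subgroup K of G, the set Con(φ,K) = { x ∈ G : φⁿ(x) ∈ K for all sufficiently large n } is an open subgroup of G. -/
/-- If the φ-invariant open subgroups of a profinite group `G` form a
neighbourhood base at the identity, then for every open subgroup `K` the set
`Con(φ,K) = { x | φⁿ(x) ∈ K for all sufficiently large n }` is an open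
subgroup of `G`. -/
theorem stmt_12 {G : Type*} [Group G] [TopologicalSpace G] [IsTopologicalGroup G]
    [CompactSpace G] [T2Space G] [TotallyDisconnectedSpace G]
    (φ : G →* G) (hφ : Continuous φ)
    (hstable : ∀ U : Subgroup G, IsOpen (U : Set G) →
      ∃ V : Subgroup G, IsOpen (V : Set G) ∧ V ≤ U ∧ V.map φ ≤ V)
    (K : Subgroup G) (hK : IsOpen (K : Set G)) :
    ∃ S : Subgroup G, IsOpen (S : Set G) ∧
      (S : Set G) = {x : G | ∃ N : ℕ, ∀ n ≥ N, (⇑φ)^[n] x ∈ K} := by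
  obtain ⟨V, hVopen, hVK, hVinv⟩ := hstable K hK
  set S : Subgroup G :=
    { carrier := {x : G | ∃ N : ℕ, ∀ n ≥ N, (⇑φ)^[n] x ∈ K}
      one_mem' := ⟨0, fun n _ => by
        rw [Function.iterate_fixed (map_one φ) n]; exact K.one_mem⟩
      mul_mem' := by
        rintro x y ⟨N, hx⟩ ⟨M, hy⟩
        exact ⟨max N M, fun n hn => by
          rw [iterate_map_mul φ n x y]
          exact K.mul_mem (hx n (le_trans (le_max_left _ _) hn))
            (hy n (le_trans (le_max_right _ _) hn))⟩
      inv_mem' := by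
        rintro x ⟨N, hx⟩
        exact ⟨N, fun n hn => by
          rw [iterate_map_inv φ n x]
          exact K.inv_mem (hx n hn)⟩ } with hS
  refine ⟨S, ?_, rfl⟩
  have hVS : V ≤ S := by
    intro x hx
    have h : ∀ n, (⇑φ)^[n] x ∈ V := by
      intro n
      induction n with
      | zero => exact hx
      | succ n ih =>
        rw [Function.iterate_succ_apply']
        exact hVinv ⟨_, ih, rfl⟩
    exact ⟨0, fun n _ => hVK (h n)⟩
  exact Subgroup.isOpen_mono hVS hVopen
end

section
/- Let G be a countably based profinite group of type (F) and φ a continuous endomorphism of G. Then the contraction group Con(φ) = { x ∈ G : φⁿ(x) → 1 } is a closed normal subgroup of G, G = Con(φ)·φ(G), and Con(φ) ∩ φ(G) = φ(Con(φ)). -/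
open Filter Topology

section Aux

set_option linter.unusedSectionVars false

variable {G : Type*} [Group G] [TopologicalSpace G] [IsTopologicalGroup G] [CompactSpace G]

/-- The intersection of all open subgroups of positive index at most `n`. -/
private def auxJ (G : Type*) [Group G] [TopologicalSpace G] (n : ℕ) : Subgroup G :=
  sInf {H : Subgroup G | IsOpen (H : Set G) ∧ 0 < H.index ∧ H.index ≤ n}

private lemma aux_index_ne_zero (H : Subgroup G) (h : IsOpen (H : Set G)) : H.index ≠ 0 := by
  have := H.quotient_finite_of_isOpen h
  exact Subgroup.index_ne_zero_of_finite

private lemma auxS_finite (hF : TypeF G) (n : ℕ) :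
    {H : Subgroup G | IsOpen (H : Set G) ∧ 0 < H.index ∧ H.index ≤ n}.Finite := by
  have hsub : {H : Subgroup G | IsOpen (H : Set G) ∧ 0 < H.index ∧ H.index ≤ n} ⊆
      ⋃ i ∈ Finset.range (n+1), {H : Subgroup G | IsOpen (H : Set G) ∧ H.index = i} := by
    intro H hH
    simp only [Set.mem_iUnion, Finset.mem_range]
    exact ⟨H.index, Nat.lt_succ_of_le hH.2.2, hH.1, rfl⟩
  exact (Set.Finite.biUnion (Finset.range (n+1)).finite_toSet (fun i _ => hF i)).subset hsub

private lemma auxJ_open (hF : TypeF G) (n : ℕ) :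
    IsOpen ((auxJ G n : Subgroup G) : Set G) := by
  have : ((auxJ G n : Subgroup G) : Set G)
      = ⋂ H ∈ {H : Subgroup G | IsOpen (H : Set G) ∧ 0 < H.index ∧ H.index ≤ n},
          (H : Set G) := by
    simp [auxJ, Subgroup.coe_sInf]
  rw [this]
  exact Set.Finite.isOpen_biInter (auxS_finite hF n) (fun H hH => hH.1)

private lemma auxJ_antitone : Antitone (auxJ G) := by
  intro m n hmn
  apply sInf_le_sInf
  intro H hH
  exact ⟨hH.1, hH.2.1, hH.2.2.trans hmn⟩

private lemma auxJ_conj (n : ℕ) (g x : G) (hx : x ∈ auxJ G n) : g * x * g⁻¹ ∈ auxJ G n := by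
  rw [auxJ, Subgroup.mem_sInf] at hx ⊢
  intro H hH
  have hH' : H.comap (MulAut.conj g).toMonoidHom
      ∈ {H : Subgroup G | IsOpen (H : Set G) ∧ 0 < H.index ∧ H.index ≤ n} := by
    refine ⟨hH.1.preimage ?_, ?_⟩
    · show Continuous fun x => g * x * g⁻¹
      exact (continuous_const.mul continuous_id).mul continuous_const
    · have : (H.comap (MulAut.conj g).toMonoidHom).index = H.index := by
        rw [Subgroup.index_comap,
          MonoidHom.range_eq_top_of_surjective _ (MulAut.conj g).surjective,
          Subgroup.relIndex_top_right]
      rw [this]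
      exact hH.2
  exact hx _ hH'

private lemma auxJ_normal (n : ℕ) : (auxJ G n).Normal :=
  ⟨fun x hx g => auxJ_conj n g x hx⟩

private lemma auxJ_phi (φ : G →* G) (hφ : Continuous φ) (n : ℕ) (x : G)
    (hx : x ∈ auxJ G n) : φ x ∈ auxJ G n := by
  rw [auxJ, Subgroup.mem_sInf] at hx ⊢
  intro H hH
  have hH' : H.comap φ ∈ {H : Subgroup G | IsOpen (H : Set G) ∧ 0 < H.index ∧ H.index ≤ n} := by
    refine ⟨hH.1.preimage hφ, ?_, ?_⟩
    · exact Nat.pos_of_ne_zero (aux_index_ne_zero _ (hH.1.preimage hφ))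
    · calc (H.comap φ).index = H.relIndex φ.range := Subgroup.index_comap H φ
        _ ≤ H.relIndex ⊤ := Subgroup.relIndex_le_of_le_right le_top
            (by rw [Subgroup.relIndex_top_right]; exact hH.2.1.ne')
        _ = H.index := Subgroup.relIndex_top_right H
        _ ≤ n := hH.2.2
  exact hx _ hH'

/-- Iterates stay in `auxJ G n`. -/
private lemma auxJ_phi_iter (φ : G →* G) (hφ : Continuous φ) (n : ℕ) (x : G)
    (hx : x ∈ auxJ G n) (k : ℕ) : (⇑φ)^[k] x ∈ auxJ G n := by
  induction k with
  | zero => exact hx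
  | succ k ih =>
    rw [Function.iterate_succ_apply']
    exact auxJ_phi φ hφ n _ ih

private lemma auxJ_basis [T2Space G] [TotallyDisconnectedSpace G] (hF : TypeF G) :
    (𝓝 (1 : G)).HasBasis (fun _ : ℕ => True) (fun n => ((auxJ G n : Subgroup G) : Set G)) := by
  constructor
  intro U
  constructor
  · intro hU
    obtain ⟨W, ⟨h1W, hWclopen⟩, hWU⟩ := (nhds_basis_clopen (1 : G)).mem_iff.mp hU
    obtain ⟨H, hH⟩ :=
      IsTopologicalGroup.exist_openNormalSubgroup_sub_clopen_nhds_of_one hWclopen h1W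
    refine ⟨H.toSubgroup.index, trivial, ?_⟩
    have hJle : auxJ G H.toSubgroup.index ≤ H.toSubgroup := by
      apply sInf_le
      exact ⟨H.isOpen, Nat.pos_of_ne_zero (aux_index_ne_zero _ H.isOpen), le_rfl⟩
    exact fun x hx => hWU (hH (hJle hx))
  · rintro ⟨n, -, hsub⟩
    exact mem_of_superset ((auxJ_open hF n).mem_nhds (auxJ G n).one_mem) hsub

/-- The `n`-th iterate of `φ` as a monoid homomorphism. -/
private def auxP (φ : G →* G) : ℕ → (G →* G)
  | 0 => MonoidHom.id G
  | n + 1 => (auxP φ n).comp φ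

private lemma auxP_apply (φ : G →* G) (n : ℕ) (x : G) :
    auxP φ n x = (⇑φ)^[n] x := by
  induction n generalizing x with
  | zero => rfl
  | succ n ih =>
    show auxP φ n (φ x) = (⇑φ)^[n + 1] x
    rw [ih, Function.iterate_succ_apply]

/-- The open subgroup `U m = { x | ∃ n, φ^[n] x ∈ auxJ G m }`. -/
private def auxU (φ : G →* G) (m : ℕ) : Subgroup G :=
  ⨆ n : ℕ, (auxJ G m).comap (auxP φ n)

private lemma auxU_mem (φ : G →* G) (hφ : Continuous φ) (m : ℕ) (x : G) :
    x ∈ auxU φ m ↔ ∃ n : ℕ, (⇑φ)^[n] x ∈ auxJ G m := by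
  have hmono : Monotone (fun n : ℕ => (auxJ G m).comap (auxP φ n)) := by
    intro a b hab y hy
    simp only [Subgroup.mem_comap, auxP_apply] at hy ⊢
    obtain ⟨k, rfl⟩ := Nat.exists_eq_add_of_le hab
    rw [add_comm, Function.iterate_add_apply]
    exact auxJ_phi_iter φ hφ m _ hy k
  rw [auxU, Subgroup.mem_iSup_of_directed hmono.directed_le]
  simp only [Subgroup.mem_comap, auxP_apply]

private lemma auxU_open (hF : TypeF G) (φ : G →* G) (hφ : Continuous φ) (m : ℕ) :
    IsOpen ((auxU φ m : Subgroup G) : Set G) := by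
  have : ((auxU φ m : Subgroup G) : Set G) = ⋃ n : ℕ, (⇑φ)^[n] ⁻¹' (auxJ G m : Set G) := by
    ext x
    simp only [SetLike.mem_coe, Set.mem_iUnion, Set.mem_preimage, auxU_mem φ hφ]
  rw [this]
  exact isOpen_iUnion fun n => (auxJ_open hF m).preimage (hφ.iterate n)

end Aux

/-- For a countably based profinite group `G` of type (F) and a continuous
endomorphism `φ`, the contraction group `Con(φ)` is a closed normal subgroup,
`G = Con(φ)·φ(G)` and `Con(φ) ∩ φ(G) = φ(Con(φ))`. -/
theorem stmt_13 {G : Type*} [Group G] [TopologicalSpace G] [IsTopologicalGroup G]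
    [CompactSpace G] [T2Space G] [TotallyDisconnectedSpace G]
    [SecondCountableTopology G]
    (hF : TypeF G) (φ : G →* G) (hφ : Continuous φ) :
    ∃ C : Subgroup G,
      (C : Set G) = {x : G | Tendsto (fun n : ℕ => (⇑φ)^[n] x) atTop (𝓝 1)} ∧
      C.Normal ∧ IsClosed (C : Set G) ∧
      (∀ g : G, ∃ c ∈ C, ∃ h ∈ Set.range ⇑φ, g = c * h) ∧
      (C : Set G) ∩ Set.range ⇑φ = ⇑φ '' (C : Set G) := by
  classical
  set C : Subgroup G :=
    { carrier := {x : G | Tendsto (fun n : ℕ => (⇑φ)^[n] x) atTop (𝓝 1)}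
      one_mem' := by
        have : (fun n : ℕ => (⇑φ)^[n] (1 : G)) = fun _ => (1 : G) := by
          funext n; exact iterate_map_one φ n
        simp only [Set.mem_setOf_eq, this]
        exact tendsto_const_nhds
      mul_mem' := by
        intro a b ha hb
        simp only [Set.mem_setOf_eq] at ha hb ⊢
        have : (fun n : ℕ => (⇑φ)^[n] (a * b))
            = fun n : ℕ => (⇑φ)^[n] a * (⇑φ)^[n] b := by
          funext n; exact iterate_map_mul φ n a b
        rw [this]
        simpa using ha.mul hb
      inv_mem' := by
        intro a ha
        simp only [Set.mem_setOf_eq] at ha ⊢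
        have : (fun n : ℕ => (⇑φ)^[n] a⁻¹) = fun n : ℕ => ((⇑φ)^[n] a)⁻¹ := by
          funext n; exact iterate_map_inv φ n a
        rw [this]
        simpa using ha.inv } with hCdef
  have hbasis := auxJ_basis (G := G) hF
  -- membership in C in terms of the auxJ filtration
  have hmemC : ∀ x : G, x ∈ C ↔ ∀ m : ℕ, ∃ n : ℕ, (⇑φ)^[n] x ∈ auxJ G m := by
    intro x
    constructor
    · intro hx m
      have := (hbasis.tendsto_right_iff.mp hx) m trivial
      exact this.exists
    · intro hx
      rw [show (x ∈ C) = Tendsto (fun n : ℕ => (⇑φ)^[n] x) atTop (𝓝 1) from rfl,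
        hbasis.tendsto_right_iff]
      intro m _
      obtain ⟨N, hN⟩ := hx m
      refine eventually_atTop.2 ⟨N, fun n hn => ?_⟩
      obtain ⟨k, rfl⟩ := Nat.exists_eq_add_of_le hn
      rw [add_comm, Function.iterate_add_apply]
      exact auxJ_phi_iter φ hφ m _ hN k
  have hCU : (C : Set G) = ⋂ m : ℕ, ((auxU φ m : Subgroup G) : Set G) := by
    ext x
    simp only [SetLike.mem_coe, Set.mem_iInter, hmemC, auxU_mem φ hφ]
  refine ⟨C, rfl, ?_, ?_, ?_, ?_⟩
  · -- normality
    refine ⟨fun x hx g => ?_⟩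
    rw [hmemC] at hx ⊢
    intro m
    obtain ⟨n, hn⟩ := hx m
    refine ⟨n, ?_⟩
    have : (⇑φ)^[n] (g * x * g⁻¹) = (⇑φ)^[n] g * (⇑φ)^[n] x * ((⇑φ)^[n] g)⁻¹ := by
      rw [iterate_map_mul, iterate_map_mul, iterate_map_inv]
    rw [this]
    exact auxJ_conj m _ _ hn
  · -- closedness
    rw [hCU]
    exact isClosed_iInter fun m =>
      Subgroup.isClosed_of_isOpen _ (auxU_open hF φ hφ m)
  · -- G = C · φ(G)
    intro g
    set F : ℕ → Set G := fun m =>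
      ((auxU φ m : Subgroup G) : Set G) ∩ {u : G | u⁻¹ * g ∈ Set.range ⇑φ} with hFdef
    have hRclosed : IsClosed (Set.range ⇑φ) := (isCompact_range hφ).isClosed
    have hFclosed : ∀ m, IsClosed (F m) := by
      intro m
      refine (Subgroup.isClosed_of_isOpen _ (auxU_open hF φ hφ m)).inter ?_
      exact hRclosed.preimage (continuous_inv.mul continuous_const)
    have hFanti : ∀ m, F (m + 1) ⊆ F m := by
      intro m u hu
      refine ⟨?_, hu.2⟩
      have hUle : auxU φ (m + 1) ≤ auxU φ m := by
        intro y hy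
        rw [auxU_mem φ hφ] at hy ⊢
        obtain ⟨n, hn⟩ := hy
        exact ⟨n, auxJ_antitone (Nat.le_succ m) hn⟩
      exact hUle hu.1
    have hFne : ∀ m, (F m).Nonempty := by
      intro m
      haveI : (auxJ G m).Normal := auxJ_normal m
      set W : ℕ → Subgroup G := fun n =>
        MonoidHom.range (auxP φ n) ⊔ auxJ G m with hWdef
      have hrange : ∀ n, MonoidHom.range (auxP φ (n + 1)) ≤ MonoidHom.range (auxP φ n) := by
        rintro n y ⟨t, rfl⟩
        refine ⟨φ t, ?_⟩
        rw [auxP_apply, auxP_apply]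
        exact (Function.iterate_succ_apply φ n t).symm
      have hWanti : ∀ n, W (n + 1) ≤ W n := fun n =>
        sup_le (le_trans (hrange n) le_sup_left) le_sup_right
      have hJind : (auxJ G m).index ≠ 0 := aux_index_ne_zero _ (auxJ_open hF m)
      have hWind : ∀ n, (W n).index ∣ (auxJ G m).index := fun n =>
        Subgroup.index_dvd_of_le le_sup_right
      have hWnz : ∀ n, (W n).index ≠ 0 := by
        intro n h0
        have := hWind n
        rw [h0] at this
        exact hJind (Nat.eq_zero_of_zero_dvd this)
      -- find a stabilization point
      have hstab : ∃ N, W N = W (N + 1) := by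
        by_contra hcon
        push_neg at hcon
        have hlt : ∀ n, W (n + 1) < W n := fun n =>
          lt_of_le_of_ne (hWanti n) (fun h => hcon n h.symm)
        have hmono : StrictMono fun n => (W n).index := by
          apply strictMono_nat_of_lt_succ
          intro n
          have hle : W (n + 1) ≤ W n := hWanti n
          have hdvd : (W n).index ∣ (W (n + 1)).index := Subgroup.index_dvd_of_le hle
          rcases lt_or_eq_of_le (Nat.le_of_dvd (Nat.pos_of_ne_zero (hWnz (n + 1))) hdvd)
            with h | h
          · exact h
          · exfalso
            have h1 : (W (n + 1)).relIndex (W n) * (W n).index = (W (n + 1)).index :=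
              Subgroup.relIndex_mul_index hle
            have : (W (n + 1)).relIndex (W n) = 1 := by
              have hpos : 0 < (W n).index := Nat.pos_of_ne_zero (hWnz n)
              have h2 : (W (n + 1)).relIndex (W n) * (W n).index = 1 * (W n).index := by
                rw [h1, one_mul]; exact h.symm
              exact Nat.eq_of_mul_eq_mul_right hpos h2
            have : W n ≤ W (n + 1) := Subgroup.relIndex_eq_one.mp this
            exact hcon n (le_antisymm this hle)
        have hbound : ∀ n, (W n).index ≤ (auxJ G m).index := fun n =>
          Nat.le_of_dvd (Nat.pos_of_ne_zero hJind) (hWind n)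
        have h3 := hmono.le_apply (x := (auxJ G m).index + 1)
        have h4 := hbound ((auxJ G m).index + 1)
        omega
      obtain ⟨N, hN⟩ := hstab
      -- φ^[N] g ∈ W N = W (N+1) = range (φ^(N+1)) * auxJ G m
      have hg : (⇑φ)^[N] g ∈ W (N + 1) := by
        rw [← hN]
        have hmem : (⇑φ)^[N] g ∈ MonoidHom.range (auxP φ N) := ⟨g, auxP_apply φ N g⟩
        exact SetLike.le_def.mp le_sup_left hmem
      rw [← SetLike.mem_coe, Subgroup.mul_normal, Set.mem_mul] at hg
      obtain ⟨a, ha, b, hb, hab⟩ := hg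
      obtain ⟨h, rfl⟩ := ha
      refine ⟨g * (φ h)⁻¹, ?_, ?_⟩
      · rw [SetLike.mem_coe, auxU_mem φ hφ]
        refine ⟨N, ?_⟩
        have hiter : (⇑φ)^[N] (g * (φ h)⁻¹)
            = (⇑φ)^[N] g * ((⇑φ)^[N] (φ h))⁻¹ := by
          rw [iterate_map_mul, iterate_map_inv]
        have hNh : (⇑φ)^[N] (φ h) = auxP φ (N + 1) h := by
          rw [auxP_apply]
          exact (Function.iterate_succ_apply φ N h).symm
        rw [hiter, hNh, ← hab]
        have hconj : auxP φ (N + 1) h * b * (auxP φ (N + 1) h)⁻¹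
            ∈ auxJ G m := auxJ_conj m _ _ hb
        simpa [mul_assoc] using hconj
      · refine ⟨h, ?_⟩
        simp [Set.mem_setOf_eq]
    obtain ⟨u, hu⟩ := IsCompact.nonempty_iInter_of_sequence_nonempty_isCompact_isClosed
      F hFanti hFne (hFclosed 0).isCompact hFclosed
    have hu' : ∀ m, u ∈ F m := by
      intro m
      exact Set.mem_iInter.mp hu m
    refine ⟨u, ?_, u⁻¹ * g, (hu' 0).2, by group⟩
    rw [hmemC]
    intro m
    have := (hu' m).1
    rw [SetLike.mem_coe, auxU_mem φ hφ] at this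
    exact this
  · -- C ∩ φ(G) = φ(C)
    apply Set.Subset.antisymm
    · rintro y ⟨hyC, w, rfl⟩
      refine ⟨w, ?_, rfl⟩
      rw [SetLike.mem_coe]
      show Tendsto (fun n : ℕ => (⇑φ)^[n] w) atTop (𝓝 1)
      have h1 : Tendsto (fun n : ℕ => (⇑φ)^[n + 1] w) atTop (𝓝 1) := by
        have heq : (fun n : ℕ => (⇑φ)^[n + 1] w) = fun n : ℕ => (⇑φ)^[n] (φ w) := by
          funext n; exact Function.iterate_succ_apply φ n w
        rw [heq]
        exact hyC
      exact (tendsto_add_atTop_iff_nat (f := fun n : ℕ => (⇑φ)^[n] w) 1).mp h1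
    · rintro y ⟨x, hx, rfl⟩
      have hxC : Tendsto (fun n : ℕ => (⇑φ)^[n] x) atTop (𝓝 1) := hx
      refine ⟨?_, ⟨x, rfl⟩⟩
      show Tendsto (fun n : ℕ => (⇑φ)^[n] (φ x)) atTop (𝓝 1)
      have heq : (fun n : ℕ => (⇑φ)^[n] (φ x)) = fun n : ℕ => (⇑φ)^[n + 1] x := by
        funext n; exact (Function.iterate_succ_apply φ n x).symm
      rw [heq]
      exact (tendsto_add_atTop_iff_nat (f := fun n : ℕ => (⇑φ)^[n] x) 1).mpr hxC
end

section
/- Let G be a countably based profinite group of type (F) and φ a continuous endomorphism of G. Set φ₊(G) = ∩_{n ≥ 0} φⁿ(G). Then G = Con(φ) ⋊ φ₊(G): that is, Con(φ) is a closed normal subgroup, φ₊(G) is a closed subgroup, Con(φ) ∩ φ₊(G) = 1, and G = Con(φ)·φ₊(G). Moreover φ restricts to an automorphism of φ₊(G), and φᵏ(Con(φ)) = Con(φ) ∩ φᵏ(G) for all k ≥ 0. -/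
open Filter Topology

namespace Stmt14Aux

variable {G : Type*} [Group G]

def itHom (φ : G →* G) : ℕ → (G →* G)
  | 0 => MonoidHom.id G
  | n + 1 => (itHom φ n).comp φ

lemma itHom_coe (φ : G →* G) : ∀ n, ⇑(itHom φ n) = (⇑φ)^[n]
  | 0 => rfl
  | n + 1 => by
    show ⇑((itHom φ n).comp φ) = _
    rw [MonoidHom.coe_comp, itHom_coe φ n, Function.iterate_succ]

lemma itHom_apply (φ : G →* G) (n : ℕ) (x : G) : itHom φ n x = (⇑φ)^[n] x := by
  rw [itHom_coe]

lemma itHom_add_apply (φ : G →* G) (a b : ℕ) (x : G) :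
    itHom φ (a + b) x = itHom φ a (itHom φ b x) := by
  simp only [itHom_apply, Function.iterate_add_apply]

lemma itHom_succ_apply' (φ : G →* G) (n : ℕ) (x : G) :
    itHom φ (n + 1) x = φ (itHom φ n x) := by
  simp only [itHom_apply, Function.iterate_succ_apply']

lemma range_antitone (φ : G →* G) : Antitone fun n => (itHom φ n).range := by
  apply antitone_nat_of_succ_le
  rintro n x ⟨w, rfl⟩
  exact ⟨φ w, rfl⟩

lemma ker_monotone (φ : G →* G) : Monotone fun n => (itHom φ n).ker := by
  apply monotone_nat_of_le_succ
  intro n x hx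
  simp only [MonoidHom.mem_ker] at hx ⊢
  rw [itHom_succ_apply', hx, map_one]

lemma finite_stab {F : Type*} [Group F] [Finite F] (ψ : F →* F) :
    ∃ M : ℕ, (∀ n, M ≤ n → (itHom ψ n).range = (itHom ψ M).range) ∧
      (∀ n, M ≤ n → (itHom ψ n).ker = (itHom ψ M).ker) := by
  obtain ⟨M, hM⟩ : ∃ M : ℕ, ∀ n, Nat.card (itHom ψ M).range ≤ Nat.card (itHom ψ n).range := by
    have hne : (Set.range fun n => Nat.card (itHom ψ n).range).Nonempty := ⟨_, ⟨0, rfl⟩⟩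
    obtain ⟨M, hM⟩ := Nat.sInf_mem hne
    refine ⟨M, fun n => ?_⟩
    have h1 : Nat.card (itHom ψ M).range =
        sInf (Set.range fun n => Nat.card (itHom ψ n).range) := hM
    rw [h1]
    exact Nat.sInf_le ⟨n, rfl⟩
  have hrange : ∀ n, M ≤ n → (itHom ψ n).range = (itHom ψ M).range := fun n hn =>
    Subgroup.eq_of_le_of_card_ge (range_antitone ψ hn) (hM n)
  refine ⟨M, hrange, fun n hn => ?_⟩
  have hind : (itHom ψ n).ker.index = (itHom ψ M).ker.index := by
    rw [Subgroup.index_ker, Subgroup.index_ker, hrange n hn]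
  have h1 := Subgroup.card_mul_index (itHom ψ n).ker
  have h2 := Subgroup.card_mul_index (itHom ψ M).ker
  have hFpos : 0 < Nat.card F := Nat.card_pos
  have hpos : 0 < (itHom ψ M).ker.index := by
    rcases Nat.eq_zero_or_pos (itHom ψ M).ker.index with h | h
    · rw [h, mul_zero] at h2; omega
    · exact h
  have hcard : Nat.card (itHom ψ n).ker = Nat.card (itHom ψ M).ker := by
    apply Nat.eq_of_mul_eq_mul_right hpos
    calc Nat.card (itHom ψ n).ker * (itHom ψ M).ker.index
        = Nat.card (itHom ψ n).ker * (itHom ψ n).ker.index := by rw [hind]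
      _ = Nat.card F := h1
      _ = Nat.card (itHom ψ M).ker * (itHom ψ M).ker.index := h2.symm
  exact (Subgroup.eq_of_le_of_card_ge
    (show (itHom ψ M).ker ≤ (itHom ψ n).ker from ker_monotone ψ hn) hcard.le).symm

section derived

variable {F : Type*} [Group F] (ψ : F →* F) (M : ℕ)

lemma range_M_le (hr : ∀ n, M ≤ n → (itHom ψ n).range = (itHom ψ M).range) :
    ∀ n, (itHom ψ M).range ≤ (itHom ψ n).range := by
  intro n
  rcases le_total n M with h | h
  · exact range_antitone ψ h
  · rw [hr n h]

lemma ker_le_M (hk : ∀ n, M ≤ n → (itHom ψ n).ker = (itHom ψ M).ker) :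
    ∀ n, (itHom ψ n).ker ≤ (itHom ψ M).ker := by
  intro n
  rcases le_total n M with h | h
  · exact ker_monotone ψ h
  · rw [hk n h]

lemma fin_triv (hr : ∀ n, M ≤ n → (itHom ψ n).range = (itHom ψ M).range)
    (hk : ∀ n, M ≤ n → (itHom ψ n).ker = (itHom ψ M).ker) :
    ∀ n z, itHom ψ n z = 1 → z ∈ (itHom ψ M).range → z = 1 := by
  intro n z hz hzr
  rw [← hr (n + M) (Nat.le_add_left M n)] at hzr
  obtain ⟨w, rfl⟩ := hzr
  have h1 : itHom ψ (n + (n + M)) w = 1 := by rw [itHom_add_apply]; exact hz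
  have hw : w ∈ (itHom ψ (n + (n + M))).ker := h1
  rw [hk _ (by omega)] at hw
  have hw' : itHom ψ M w = 1 := hw
  calc itHom ψ (n + M) w = itHom ψ n (itHom ψ M w) := itHom_add_apply ψ n M w
    _ = itHom ψ n 1 := by rw [hw']
    _ = 1 := map_one _

lemma fin_decomp (hr : ∀ n, M ≤ n → (itHom ψ n).range = (itHom ψ M).range) (g : F) :
    ∃ h ∈ (itHom ψ M).range, itHom ψ M (g * h⁻¹) = 1 := by
  have hg : itHom ψ M g ∈ (itHom ψ M).range := ⟨g, rfl⟩
  rw [← hr (M + M) (Nat.le_add_left M M)] at hg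
  obtain ⟨w, hw⟩ := hg
  refine ⟨itHom ψ M w, ⟨w, rfl⟩, ?_⟩
  rw [map_mul, map_inv]
  have h2 : itHom ψ M (itHom ψ M w) = itHom ψ M g := by
    rw [← itHom_add_apply]; exact hw
  rw [h2, mul_inv_cancel]

lemma fin_conj (hk : ∀ n, M ≤ n → (itHom ψ n).ker = (itHom ψ M).ker) :
    ∀ k x, itHom ψ M x = 1 → x ∈ (itHom ψ k).range →
      ∃ c, itHom ψ M c = 1 ∧ itHom ψ k c = x := by
  intro k x hx hxr
  obtain ⟨g, rfl⟩ := hxr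
  have h1 : itHom ψ (M + k) g = 1 := by rw [itHom_add_apply]; exact hx
  have hg : g ∈ (itHom ψ (M + k)).ker := h1
  rw [hk (M + k) (Nat.le_add_right M k)] at hg
  exact ⟨g, hg, rfl⟩

end derived

section Topo

variable (G) [TopologicalSpace G]

def SS (m : ℕ) : Set (Subgroup G) := {H | IsOpen (H : Set G) ∧ H.index ≤ m}

def KK (m : ℕ) : Subgroup G := sInf (SS G m)

variable {G}

lemma KK_anti {m m' : ℕ} (h : m ≤ m') : KK G m' ≤ KK G m :=
  sInf_le_sInf fun H hH => ⟨hH.1, hH.2.trans h⟩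

lemma KK_isOpen (hF : TypeF G) (m : ℕ) : IsOpen ((KK G m) : Set G) := by
  have hfin : (SS G m).Finite := by
    apply Set.Finite.subset (Set.Finite.biUnion (Set.finite_Iic m) fun j _ => hF j)
    intro H hH
    exact Set.mem_biUnion (hH.2 : H.index ∈ Set.Iic m) ⟨hH.1, rfl⟩
  have hco : ((KK G m) : Set G) = ⋂ H ∈ SS G m, (H : Set G) := Subgroup.coe_sInf _
  rw [hco]
  exact hfin.isOpen_biInter fun H hH => hH.1

variable [IsTopologicalGroup G]

lemma index_comap_le [CompactSpace G] (φ : G →* G) {H : Subgroup G}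
    (hH : IsOpen (H : Set G)) : (H.comap φ).index ≤ H.index := by
  have : Finite (G ⧸ H) := H.quotient_finite_of_isOpen hH
  let f : G ⧸ (H.comap φ) → G ⧸ H :=
    Quotient.map' φ (fun a b hab => by
      rw [QuotientGroup.leftRel_apply] at hab ⊢
      have h2 := Subgroup.mem_comap.mp hab
      simpa using h2)
  have hinj : Function.Injective f := by
    intro a b
    induction' a using Quotient.inductionOn' with a
    induction' b using Quotient.inductionOn' with b
    intro hab
    have h3 : ((φ a : G) : G ⧸ H) = ((φ b : G) : G ⧸ H) := hab
    have h4 : (φ a)⁻¹ * φ b ∈ H := QuotientGroup.eq.mp h3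
    apply Quotient.sound'
    rw [QuotientGroup.leftRel_apply]
    rw [Subgroup.mem_comap]
    simpa using h4
  calc (H.comap φ).index = Nat.card (G ⧸ H.comap φ) := rfl
    _ ≤ Nat.card (G ⧸ H) := Nat.card_le_card_of_injective f hinj
    _ = H.index := rfl

lemma KK_comap_mem [CompactSpace G] {φ : G →* G} (hφ : Continuous φ) (m : ℕ) {x : G}
    (hx : x ∈ KK G m) : φ x ∈ KK G m := by
  rw [KK, Subgroup.mem_sInf] at hx ⊢
  intro H hH
  have h1 : IsOpen ((H.comap φ : Subgroup G) : Set G) := hH.1.preimage hφ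
  have h2 : (H.comap φ).index ≤ m := le_trans (index_comap_le φ hH.1) hH.2
  exact Subgroup.mem_comap.mp (hx (H.comap φ) ⟨h1, h2⟩)

instance KK_normal (m : ℕ) : (KK G m).Normal := by
  constructor
  intro x hx g
  rw [KK, Subgroup.mem_sInf] at hx ⊢
  intro H hH
  set e := (MulAut.conj g).toMonoidHom with he
  have hec : ⇑e = fun y : G => g * y * g⁻¹ := by
    funext y; simp [he, MulAut.conj_apply]
  have h1 : IsOpen ((H.comap e : Subgroup G) : Set G) := by
    have : ((H.comap e : Subgroup G) : Set G) = ⇑e ⁻¹' (H : Set G) := rfl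
    rw [this, hec]
    exact hH.1.preimage (by continuity)
  have h2 : (H.comap e).index = H.index := by
    rw [Subgroup.index_comap]
    have hsurj : Function.Surjective ⇑e := (MulAut.conj g).surjective
    rw [e.range_eq_top_of_surjective hsurj, Subgroup.relIndex_top_right]
  have h3 := Subgroup.mem_comap.mp (hx (H.comap e) ⟨h1, h2.le.trans hH.2⟩)
  rw [hec] at h3
  exact h3

lemma KK_basis [CompactSpace G] [T2Space G] [TotallyDisconnectedSpace G]
    {U : Set G} (hU : U ∈ 𝓝 (1 : G)) : ∃ m, ((KK G m) : Set G) ⊆ U := by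
  obtain ⟨V, hVU, hVopen, h1V⟩ := mem_nhds_iff.mp hU
  obtain ⟨W, hWclopen, h1W, hWV⟩ := compact_exists_isClopen_in_isOpen hVopen h1V
  obtain ⟨H, hH⟩ := IsTopologicalGroup.exist_openSubgroup_sub_clopen_nhds_of_one hWclopen h1W
  refine ⟨H.1.index, fun x hx => hVU (hWV (hH ?_))⟩
  have hle : KK G H.1.index ≤ H.1 := sInf_le ⟨H.isOpen, le_rfl⟩
  exact hle hx

lemma KK_inter [CompactSpace G] [T2Space G] [TotallyDisconnectedSpace G]
    {x : G} (hx : ∀ m, x ∈ KK G m) : x = 1 := by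
  by_contra hne
  have hU : ({x}ᶜ : Set G) ∈ 𝓝 (1 : G) := by
    apply IsOpen.mem_nhds isOpen_compl_singleton
    simpa using Ne.symm hne
  obtain ⟨m, hm⟩ := KK_basis hU
  exact hm (hx m) rfl

variable [CompactSpace G]

lemma KK_it_mem {φ : G →* G} (hφ : Continuous φ) (m n : ℕ) {x : G}
    (hx : x ∈ KK G m) : itHom φ n x ∈ KK G m := by
  induction n with
  | zero => exact hx
  | succ n ih => rw [itHom_succ_apply']; exact KK_comap_mem hφ m ih

lemma KK_it_le {φ : G →* G} (hφ : Continuous φ) (m : ℕ) {a b : ℕ} (x : G) (hab : a ≤ b)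
    (ha : itHom φ a x ∈ KK G m) : itHom φ b x ∈ KK G m := by
  obtain ⟨d, rfl⟩ := Nat.exists_eq_add_of_le hab
  rw [Nat.add_comm, itHom_add_apply]
  exact KK_it_mem hφ m d ha

def Lcon (φ : G →* G) (hφ : Continuous φ) (m : ℕ) : Subgroup G where
  carrier := {x | ∃ n, itHom φ n x ∈ KK G m}
  one_mem' := ⟨0, by simpa using (KK G m).one_mem⟩
  mul_mem' := by
    rintro x y ⟨a, ha⟩ ⟨b, hb⟩
    refine ⟨max a b, ?_⟩
    rw [map_mul]
    exact (KK G m).mul_mem (KK_it_le hφ m x (le_max_left a b) ha)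
      (KK_it_le hφ m y (le_max_right a b) hb)
  inv_mem' := by
    rintro x ⟨a, ha⟩
    exact ⟨a, by rw [map_inv]; exact (KK G m).inv_mem ha⟩

lemma mem_Lcon {φ : G →* G} {hφ : Continuous φ} {m : ℕ} {x : G} :
    x ∈ Lcon φ hφ m ↔ ∃ n, itHom φ n x ∈ KK G m := Iff.rfl

lemma Lcon_isOpen {φ : G →* G} (hφ : Continuous φ) (hF : TypeF G) (m : ℕ) :
    IsOpen ((Lcon φ hφ m : Subgroup G) : Set G) := by
  have hco : ((Lcon φ hφ m : Subgroup G) : Set G)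
      = ⋃ n, (⇑(itHom φ n)) ⁻¹' ((KK G m : Subgroup G) : Set G) := by
    ext x
    simp only [SetLike.mem_coe, mem_Lcon, Set.mem_iUnion, Set.mem_preimage]
  rw [hco]
  exact isOpen_iUnion fun n =>
    (KK_isOpen hF m).preimage (by rw [itHom_coe]; exact hφ.iterate n)

lemma Lcon_normal {φ : G →* G} (hφ : Continuous φ) (m : ℕ) : (Lcon φ hφ m).Normal := by
  constructor
  rintro x ⟨n, hn⟩ g
  refine ⟨n, ?_⟩
  have : itHom φ n (g * x * g⁻¹) = itHom φ n g * itHom φ n x * (itHom φ n g)⁻¹ := by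
    rw [map_mul, map_mul, map_inv]
  rw [this]
  exact (KK_normal m).conj_mem _ hn _

def psiQ (φ : G →* G) (hφ : Continuous φ) (m : ℕ) : (G ⧸ KK G m) →* (G ⧸ KK G m) :=
  QuotientGroup.map _ _ φ (fun _ hx => Subgroup.mem_comap.mpr (KK_comap_mem hφ m hx))

lemma psiQ_mk {φ : G →* G} (hφ : Continuous φ) (m : ℕ) (x : G) :
    psiQ φ hφ m ↑x = ↑(φ x) :=
  QuotientGroup.map_mk _ _ _ _ x

lemma psiQ_it {φ : G →* G} (hφ : Continuous φ) (m : ℕ) :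
    ∀ (n : ℕ) (x : G), itHom (psiQ φ hφ m) n ↑x = ↑(itHom φ n x) := by
  intro n
  induction n with
  | zero => intro x; rfl
  | succ n ih =>
    intro x
    show itHom (psiQ φ hφ m) n (psiQ φ hφ m ↑x) = _
    rw [psiQ_mk, ih]
    rfl

lemma psiQ_ker_iff {φ : G →* G} (hφ : Continuous φ) (m n : ℕ) (x : G) :
    itHom (psiQ φ hφ m) n ↑x = 1 ↔ itHom φ n x ∈ KK G m := by
  rw [psiQ_it]
  exact QuotientGroup.eq_one_iff _

lemma psiQ_range_iff {φ : G →* G} (hφ : Continuous φ) (m n : ℕ) (x : G) :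
    ((x : G ⧸ KK G m) ∈ (itHom (psiQ φ hφ m) n).range) ↔
      ∃ w, (itHom φ n w)⁻¹ * x ∈ KK G m := by
  constructor
  · rintro ⟨q, hq⟩
    obtain ⟨w, rfl⟩ := QuotientGroup.mk_surjective q
    rw [psiQ_it] at hq
    exact ⟨w, QuotientGroup.eq.mp hq⟩
  · rintro ⟨w, hw⟩
    exact ⟨↑w, by rw [psiQ_it]; exact QuotientGroup.eq.mpr hw⟩

lemma RK_closed (φ : G →* G) (hF : TypeF G) (m n : ℕ) :
    IsClosed {h : G | ∃ w, (itHom φ n w)⁻¹ * h ∈ KK G m} := by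
  have hco : {h : G | ∃ w, (itHom φ n w)⁻¹ * h ∈ KK G m}
      = (((itHom φ n).range ⊔ KK G m : Subgroup G) : Set G) := by
    ext h
    rw [SetLike.mem_coe, ← SetLike.mem_coe, Subgroup.mul_normal]
    constructor
    · rintro ⟨w, hw⟩
      exact ⟨itHom φ n w, ⟨w, rfl⟩, (itHom φ n w)⁻¹ * h, hw, by group⟩
    · rintro ⟨a, ⟨w, rfl⟩, b, hb, rfl⟩
      exact ⟨w, by simpa using hb⟩
  rw [hco]
  exact Subgroup.isClosed_of_isOpen _ (Subgroup.isOpen_mono le_sup_right (KK_isOpen hF m))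

lemma mem_of_KK_approx [T2Space G] [TotallyDisconnectedSpace G] {S : Set G} (hS : IsClosed S)
    {x : G} (hx : ∀ m, ∃ s ∈ S, s⁻¹ * x ∈ KK G m) : x ∈ S := by
  have hxc : x ∈ closure S := by
    rw [mem_closure_iff_nhds]
    intro U hU
    have hc : Continuous fun k : G => x * k⁻¹ := continuous_const.mul continuous_inv
    have h1 : (fun k : G => x * k⁻¹) ⁻¹' U ∈ 𝓝 (1 : G) := by
      apply (hc.continuousAt (x := (1 : G))).preimage_mem_nhds
      simpa using hU
    obtain ⟨m, hm⟩ := KK_basis h1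
    obtain ⟨s, hsS, hs⟩ := hx m
    refine ⟨s, ?_, hsS⟩
    have h2 : s = x * (s⁻¹ * x)⁻¹ := by group
    rw [h2]
    exact hm hs
  rwa [hS.closure_eq] at hxc

end Topo

end Stmt14Aux

open Stmt14Aux in
/-- Theorem A: for a countably based profinite group `G` of type (F) and a
continuous endomorphism `φ`, `G = Con(φ) ⋊ φ₊(G)`, where
`φ₊(G) = ⋂_{n ≥ 0} φⁿ(G)`: `Con(φ)` is a closed normal subgroup, `φ₊(G)` is a
closed subgroup, they intersect trivially, `G = Con(φ)·φ₊(G)`, `φ` restricts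
to an automorphism (a bijection) of `φ₊(G)`, and
`φᵏ(Con(φ)) = Con(φ) ∩ φᵏ(G)` for all `k ≥ 0`. -/
theorem stmt_14 {G : Type*} [Group G] [TopologicalSpace G] [IsTopologicalGroup G]
    [CompactSpace G] [T2Space G] [TotallyDisconnectedSpace G]
    [SecondCountableTopology G]
    (hF : TypeF G) (φ : G →* G) (hφ : Continuous φ) :
    ∃ C P : Subgroup G,
      (C : Set G) = {x : G | Tendsto (fun n : ℕ => (⇑φ)^[n] x) atTop (𝓝 1)} ∧
      (P : Set G) = ⋂ n : ℕ, Set.range ((⇑φ)^[n]) ∧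
      C.Normal ∧ IsClosed (C : Set G) ∧ IsClosed (P : Set G) ∧
      C ⊓ P = ⊥ ∧
      (∀ g : G, ∃ c ∈ C, ∃ h ∈ P, g = c * h) ∧
      Set.BijOn ⇑φ (P : Set G) (P : Set G) ∧
      (∀ k : ℕ, (⇑φ)^[k] '' (C : Set G) = (C : Set G) ∩ Set.range ((⇑φ)^[k])) := by
  classical
  have hfinQ : ∀ m : ℕ, Finite (G ⧸ KK G m) := fun m =>
    (KK G m).quotient_finite_of_isOpen (KK_isOpen hF m)
  have hstab : ∀ m : ℕ, ∃ Mm : ℕ,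
      (∀ n, Mm ≤ n → (itHom (psiQ φ hφ m) n).range = (itHom (psiQ φ hφ m) Mm).range) ∧
      (∀ n, Mm ≤ n → (itHom (psiQ φ hφ m) n).ker = (itHom (psiQ φ hφ m) Mm).ker) := fun m => by
    haveI := hfinQ m
    exact finite_stab (psiQ φ hφ m)
  choose M hM1 hM2 using hstab
  set C : Subgroup G := ⨅ m, Lcon φ hφ m with hC
  set P : Subgroup G := ⨅ n, (itHom φ n).range with hP
  have hmemC : ∀ x : G, x ∈ C ↔ ∀ m, ∃ n, itHom φ n x ∈ KK G m := by
    intro x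
    rw [hC, Subgroup.mem_iInf]
    exact Iff.rfl
  have hmemP : ∀ x : G, x ∈ P ↔ ∀ n, x ∈ (itHom φ n).range := by
    intro x
    rw [hP, Subgroup.mem_iInf]
  have hchar : ∀ x : G, Tendsto (fun n : ℕ => (⇑φ)^[n] x) atTop (𝓝 1) ↔
      ∀ m, ∃ n, itHom φ n x ∈ KK G m := by
    intro x
    constructor
    · intro h m
      have h1 : ∀ᶠ n in atTop, (⇑φ)^[n] x ∈ ((KK G m : Subgroup G) : Set G) :=
        h.eventually_mem ((KK_isOpen hF m).mem_nhds (KK G m).one_mem)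
      obtain ⟨n, hn⟩ := h1.exists
      exact ⟨n, by rw [itHom_apply]; exact hn⟩
    · intro h
      rw [Filter.tendsto_def]
      intro U hU
      obtain ⟨m, hm⟩ := KK_basis hU
      obtain ⟨n, hn⟩ := h m
      rw [Filter.mem_atTop_sets]
      refine ⟨n, fun b hb => ?_⟩
      have h2 : itHom φ b x ∈ KK G m := KK_it_le hφ m x hb hn
      rw [itHom_apply] at h2
      exact hm h2
  have hCset : (C : Set G) = {x : G | Tendsto (fun n : ℕ => (⇑φ)^[n] x) atTop (𝓝 1)} := by
    ext x
    rw [SetLike.mem_coe, hmemC x, Set.mem_setOf_eq]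
    exact (hchar x).symm
  have hPset : (P : Set G) = ⋂ n : ℕ, Set.range ((⇑φ)^[n]) := by
    ext x
    rw [SetLike.mem_coe, hmemP x, Set.mem_iInter]
    refine forall_congr' fun n => ?_
    rw [← itHom_coe]
    exact Iff.rfl
  have hCclosed : IsClosed (C : Set G) := by
    have h1 : (C : Set G) = ⋂ m, ((Lcon φ hφ m : Subgroup G) : Set G) := by
      rw [hC]; exact Subgroup.coe_iInf
    rw [h1]
    exact isClosed_iInter fun m => Subgroup.isClosed_of_isOpen _ (Lcon_isOpen hφ hF m)
  have hrange_closed : ∀ n : ℕ, IsClosed (((itHom φ n).range : Subgroup G) : Set G) := by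
    intro n
    have h1 : (((itHom φ n).range : Subgroup G) : Set G) = Set.range ⇑(itHom φ n) :=
      MonoidHom.coe_range _
    rw [h1, itHom_coe]
    exact (isCompact_range (hφ.iterate n)).isClosed
  have hPclosed : IsClosed (P : Set G) := by
    have h1 : (P : Set G) = ⋂ n, (((itHom φ n).range : Subgroup G) : Set G) := by
      rw [hP]; exact Subgroup.coe_iInf
    rw [h1]
    exact isClosed_iInter hrange_closed
  have hNormal : C.Normal := by
    constructor
    intro x hx g
    rw [hC, Subgroup.mem_iInf] at hx ⊢
    exact fun m => (Lcon_normal hφ m).conj_mem x (hx m) g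
  have htriv : ∀ x : G, x ∈ C → x ∈ P → x = 1 := by
    intro x hxC hxP
    apply KK_inter
    intro m
    haveI := hfinQ m
    obtain ⟨n, hn⟩ := (hmemC x).mp hxC m
    have hker : itHom (psiQ φ hφ m) n ↑x = 1 := (psiQ_ker_iff hφ m n x).mpr hn
    have hrange : (↑x : G ⧸ KK G m) ∈ (itHom (psiQ φ hφ m) (M m)).range := by
      obtain ⟨w, hw⟩ := (hmemP x).mp hxP (M m)
      exact ⟨↑w, by rw [psiQ_it, hw]⟩
    have h1 : (↑x : G ⧸ KK G m) = 1 :=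
      fin_triv (psiQ φ hφ m) (M m) (hM1 m) (hM2 m) n ↑x hker hrange
    exact (QuotientGroup.eq_one_iff x).mp h1
  have hinf : C ⊓ P = ⊥ := by
    rw [eq_bot_iff]
    intro x hx
    rw [Subgroup.mem_inf] at hx
    rw [Subgroup.mem_bot]
    exact htriv x hx.1 hx.2
  have hdecomp : ∀ g : G, ∃ c ∈ C, ∃ h ∈ P, g = c * h := by
    intro g
    set A : ℕ → Set G := fun m =>
      {h : G | ∀ n, ∃ w, (itHom φ n w)⁻¹ * h ∈ KK G m} ∩
        ((fun h : G => g * h⁻¹) ⁻¹' ((Lcon φ hφ m : Subgroup G) : Set G)) with hA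
    have hAclosed : ∀ m, IsClosed (A m) := by
      intro m
      apply IsClosed.inter
      · have h1 : {h : G | ∀ n, ∃ w, (itHom φ n w)⁻¹ * h ∈ KK G m}
            = ⋂ n, {h : G | ∃ w, (itHom φ n w)⁻¹ * h ∈ KK G m} := by
          ext h; simp only [Set.mem_iInter, Set.mem_setOf_eq]
        rw [h1]
        exact isClosed_iInter fun n => RK_closed φ hF m n
      · exact (Subgroup.isClosed_of_isOpen _ (Lcon_isOpen hφ hF m)).preimage
          (continuous_const.mul continuous_inv)
    have hAanti : ∀ m, A (m + 1) ⊆ A m := by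
      rintro m h ⟨h1, h2⟩
      constructor
      · intro n
        obtain ⟨w, hw⟩ := h1 n
        exact ⟨w, KK_anti (Nat.le_succ m) hw⟩
      · obtain ⟨n, hn⟩ := h2
        exact ⟨n, KK_anti (Nat.le_succ m) hn⟩
    have hAne : ∀ m, (A m).Nonempty := by
      intro m
      haveI := hfinQ m
      obtain ⟨hbar, hbr, hbk⟩ := fin_decomp (psiQ φ hφ m) (M m) (hM1 m) (↑g)
      obtain ⟨h, rfl⟩ := QuotientGroup.mk_surjective hbar
      refine ⟨h, fun n => ?_, ?_⟩
      · have h3 : (↑h : G ⧸ KK G m) ∈ (itHom (psiQ φ hφ m) n).range :=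
          range_M_le (psiQ φ hφ m) (M m) (hM1 m) n hbr
        exact (psiQ_range_iff hφ m n h).mp h3
      · show g * h⁻¹ ∈ Lcon φ hφ m
        refine ⟨M m, ?_⟩
        apply (psiQ_ker_iff hφ m (M m) (g * h⁻¹)).mp
        have h4 : ((g * h⁻¹ : G) : G ⧸ KK G m) = (↑g : G ⧸ KK G m) * (↑h : G ⧸ KK G m)⁻¹ := by
          rfl
        rw [h4]
        exact hbk
    obtain ⟨h, hh⟩ := IsCompact.nonempty_iInter_of_sequence_nonempty_isCompact_isClosed
      A hAanti hAne ((hAclosed 0).isCompact) hAclosed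
    rw [Set.mem_iInter] at hh
    refine ⟨g * h⁻¹, ?_, h, ?_, by group⟩
    · rw [hmemC]
      intro m
      exact (hh m).2
    · rw [hmemP]
      intro n
      rw [← SetLike.mem_coe]
      apply mem_of_KK_approx (hrange_closed n)
      intro m
      obtain ⟨w, hw⟩ := (hh m).1 n
      exact ⟨itHom φ n w, ⟨w, rfl⟩, hw⟩
  have hmapsto : ∀ x : G, x ∈ P → φ x ∈ P := by
    intro x hx
    rw [hmemP] at hx ⊢
    intro n
    obtain ⟨w, rfl⟩ := hx n
    exact ⟨φ w, itHom_succ_apply' φ n w⟩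
  have hinjP : ∀ x ∈ (P : Set G), ∀ y ∈ (P : Set G), φ x = φ y → x = y := by
    intro x hx y hy hxy
    rw [SetLike.mem_coe, hmemP] at hx hy
    have key : ∀ m : ℕ, x⁻¹ * y ∈ KK G m := by
      intro m
      haveI := hfinQ m
      have hxr : (↑x : G ⧸ KK G m) ∈ (itHom (psiQ φ hφ m) (M m)).range := by
        obtain ⟨w, hw⟩ := hx (M m)
        exact ⟨↑w, by rw [psiQ_it, hw]⟩
      have hyr : (↑y : G ⧸ KK G m) ∈ (itHom (psiQ φ hφ m) (M m)).range := by
        obtain ⟨w, hw⟩ := hy (M m)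
        exact ⟨↑w, by rw [psiQ_it, hw]⟩
      have hz : ((↑x : G ⧸ KK G m)⁻¹ * ↑y) ∈ (itHom (psiQ φ hφ m) (M m)).range :=
        Subgroup.mul_mem _ (Subgroup.inv_mem _ hxr) hyr
      have h1 : itHom (psiQ φ hφ m) 1 ((↑x : G ⧸ KK G m)⁻¹ * ↑y) = 1 := by
        show psiQ φ hφ m ((↑x : G ⧸ KK G m)⁻¹ * ↑y) = 1
        rw [map_mul, map_inv, psiQ_mk, psiQ_mk, hxy]
        exact inv_mul_cancel _
      have h2 : ((↑x : G ⧸ KK G m)⁻¹ * ↑y) = 1 :=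
        fin_triv (psiQ φ hφ m) (M m) (hM1 m) (hM2 m) 1 _ h1 hz
      have h3 : ((x⁻¹ * y : G) : G ⧸ KK G m) = 1 := by
        have h4 : ((x⁻¹ * y : G) : G ⧸ KK G m) = (↑x : G ⧸ KK G m)⁻¹ * ↑y := rfl
        rw [h4]; exact h2
      exact (QuotientGroup.eq_one_iff _).mp h3
    have h5 : x⁻¹ * y = 1 := KK_inter key
    exact (inv_mul_eq_one.mp h5)
  have hsurjP : ∀ y ∈ (P : Set G), ∃ x ∈ (P : Set G), φ x = y := by
    intro y hy
    rw [SetLike.mem_coe, hmemP] at hy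
    set B : ℕ → Set G := fun n =>
      {x : G | φ x = y} ∩ (((itHom φ n).range : Subgroup G) : Set G) with hB
    have hBclosed : ∀ n, IsClosed (B n) := fun n =>
      (isClosed_singleton.preimage hφ).inter (hrange_closed n)
    have hBanti : ∀ n, B (n + 1) ⊆ B n := by
      rintro n x ⟨h1, h2⟩
      exact ⟨h1, range_antitone φ (Nat.le_succ n) h2⟩
    have hBne : ∀ n, (B n).Nonempty := by
      intro n
      obtain ⟨w, hw⟩ := hy (n + 1)
      refine ⟨itHom φ n w, ?_, ⟨w, rfl⟩⟩
      show φ (itHom φ n w) = y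
      rw [← itHom_succ_apply', hw]
    obtain ⟨x, hx⟩ := IsCompact.nonempty_iInter_of_sequence_nonempty_isCompact_isClosed
      B hBanti hBne ((hBclosed 0).isCompact) hBclosed
    rw [Set.mem_iInter] at hx
    refine ⟨x, ?_, (hx 0).1⟩
    rw [SetLike.mem_coe, hmemP]
    exact fun n => (hx n).2
  have hk9 : ∀ k : ℕ, (⇑φ)^[k] '' (C : Set G) = (C : Set G) ∩ Set.range ((⇑φ)^[k]) := by
    intro k
    rw [← itHom_coe]
    apply Set.Subset.antisymm
    · rintro x ⟨c, hc, rfl⟩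
      rw [SetLike.mem_coe, hmemC] at hc
      constructor
      · rw [SetLike.mem_coe, hmemC]
        intro m
        obtain ⟨n, hn⟩ := hc m
        refine ⟨n, ?_⟩
        rw [← itHom_add_apply]
        exact KK_it_le hφ m c (Nat.le_add_right n k) hn
      · exact ⟨c, rfl⟩
    · rintro x ⟨hxC, g0, rfl⟩
      rw [SetLike.mem_coe, hmemC] at hxC
      set B2 : ℕ → Set G := fun m =>
        {c : G | (itHom φ k c)⁻¹ * (itHom φ k g0) ∈ KK G m} ∩
          ((Lcon φ hφ m : Subgroup G) : Set G) with hB2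
      have hB2closed : ∀ m, IsClosed (B2 m) := by
        intro m
        apply IsClosed.inter
        · have hcont : Continuous fun c : G => (itHom φ k c)⁻¹ * (itHom φ k g0) := by
            have h1 : Continuous ⇑(itHom φ k) := by rw [itHom_coe]; exact hφ.iterate k
            exact h1.inv.mul continuous_const
          exact (Subgroup.isClosed_of_isOpen _ (KK_isOpen hF m)).preimage hcont
        · exact Subgroup.isClosed_of_isOpen _ (Lcon_isOpen hφ hF m)
      have hB2anti : ∀ m, B2 (m + 1) ⊆ B2 m := by
        rintro m c ⟨h1, h2⟩
        refine ⟨KK_anti (Nat.le_succ m) h1, ?_⟩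
        obtain ⟨n, hn⟩ := h2
        exact ⟨n, KK_anti (Nat.le_succ m) hn⟩
      have hB2ne : ∀ m, (B2 m).Nonempty := by
        intro m
        haveI := hfinQ m
        obtain ⟨n, hn⟩ := hxC m
        have hker : itHom (psiQ φ hφ m) (M m) (↑(itHom φ k g0) : G ⧸ KK G m) = 1 := by
          apply ker_le_M (psiQ φ hφ m) (M m) (hM2 m) n
          exact (psiQ_ker_iff hφ m n _).mpr hn
        have hrange : (↑(itHom φ k g0) : G ⧸ KK G m) ∈ (itHom (psiQ φ hφ m) k).range :=
          ⟨↑g0, psiQ_it hφ m k g0⟩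
        obtain ⟨cbar, hc1, hc2⟩ := fin_conj (psiQ φ hφ m) (M m) (hM2 m) k _ hker hrange
        obtain ⟨c, rfl⟩ := QuotientGroup.mk_surjective cbar
        refine ⟨c, ?_, ?_⟩
        · show (itHom φ k c)⁻¹ * (itHom φ k g0) ∈ KK G m
          apply QuotientGroup.eq.mp
          rw [← psiQ_it hφ m k c]
          exact hc2
        · exact ⟨M m, (psiQ_ker_iff hφ m (M m) c).mp hc1⟩
      obtain ⟨c, hcmem⟩ := IsCompact.nonempty_iInter_of_sequence_nonempty_isCompact_isClosed
        B2 hB2anti hB2ne ((hB2closed 0).isCompact) hB2closed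
      rw [Set.mem_iInter] at hcmem
      have hck : itHom φ k c = itHom φ k g0 := by
        have h6 : (itHom φ k c)⁻¹ * itHom φ k g0 = 1 := KK_inter fun m => (hcmem m).1
        exact inv_mul_eq_one.mp h6
      refine ⟨c, ?_, hck⟩
      rw [SetLike.mem_coe, hmemC]
      intro m
      exact (hcmem m).2
  exact ⟨C, P, hCset, hPset, hNormal, hCclosed, hPclosed, hinf, hdecomp,
    ⟨fun x hx => hmapsto x hx, hinjP, fun y hy => by
      obtain ⟨x, hx, hxy⟩ := hsurjP y hy
      exact ⟨x, hx, hxy⟩⟩, hk9⟩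
end

section
/- Let G be a profinite group of type (F) and let Λ be a set of continuous injective endomorphisms of G with open image such that { λ(G) : λ ∈ Λ } forms a neighbourhood base at the identity. If the closed subgroup generated by all contraction groups Con(λ), λ ∈ Λ, is proper in G, then a contradiction arises; hence G equals the closed subgroup generated by the Con(λ) (λ ∈ Λ). -/
open Filter Topology Pointwise

section Aux

variable {G : Type*} [Group G] [TopologicalSpace G] [IsTopologicalGroup G]
  [CompactSpace G]

/-- Iterates of an endomorphism, as monoid homs. -/
private def iterHom (l : G →* G) : ℕ → (G →* G)
  | 0 => MonoidHom.id G
  | (m + 1) => (iterHom l m).comp l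

private lemma iterHom_apply (l : G →* G) : ∀ (m : ℕ) (x : G),
    iterHom l m x = (⇑l)^[m] x := by
  intro m
  induction m with
  | zero => intro x; rfl
  | succ m ih =>
    intro x
    show iterHom l m (l x) = (⇑l)^[m + 1] x
    rw [Function.iterate_succ_apply, ih]

private lemma iterHom_succ_apply (l : G →* G) (m : ℕ) (x : G) :
    iterHom l (m + 1) x = iterHom l m (l x) := rfl

private lemma l_iterHom (l : G →* G) (m : ℕ) (x : G) :
    l (iterHom l m x) = iterHom l (m + 1) x := by
  rw [iterHom_apply, iterHom_apply]
  exact (Function.iterate_succ_apply' (⇑l) m x).symm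

/-- The family of open normal subgroups of index at most `n`. -/
private def SS (G : Type*) [Group G] [TopologicalSpace G] (n : ℕ) : Set (Subgroup G) :=
  {H | IsOpen (H : Set G) ∧ H.Normal ∧ H.index ≤ n ∧ H.index ≠ 0}

private lemma SS_finite (hF : TypeF G) (n : ℕ) : (SS G n).Finite := by
  have h : SS G n ⊆ ⋃ j ∈ Finset.range (n + 1),
      {H : Subgroup G | IsOpen (H : Set G) ∧ H.index = j} := by
    intro H hH
    simp only [Set.mem_iUnion, Finset.mem_range]
    exact ⟨H.index, Nat.lt_succ_of_le hH.2.2.1, hH.1, rfl⟩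
  exact Set.Finite.subset (Set.Finite.biUnion (Finset.range (n + 1)).finite_toSet
    (fun j _ => hF j)) h

/-- The intersection of all open normal subgroups of index at most `n`. -/
private def KK (G : Type*) [Group G] [TopologicalSpace G] (n : ℕ) : Subgroup G :=
  sInf (SS G n)

private lemma KK_isOpen (hF : TypeF G) (n : ℕ) : IsOpen ((KK G n : Subgroup G) : Set G) := by
  rw [KK, Subgroup.coe_sInf]
  exact Set.Finite.isOpen_biInter (SS_finite hF n) (fun H hH => hH.1)

private lemma KK_index_ne_zero (hF : TypeF G) (n : ℕ) : (KK G n).index ≠ 0 := by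
  have := Subgroup.quotient_finite_of_isOpen (KK G n) (KK_isOpen hF n)
  exact Subgroup.index_ne_zero_of_finite

private lemma KK_normal (n : ℕ) : (KK G n).Normal := by
  constructor
  intro x hx g
  rw [KK, Subgroup.mem_sInf] at hx ⊢
  intro H hH
  exact hH.2.1.conj_mem x (hx H hH) g

/-- Every continuous endomorphism maps `KK G n` into itself. -/
private lemma KK_invariant (n : ℕ) (l : G →* G) (hc : Continuous l) :
    ∀ x ∈ KK G n, l x ∈ KK G n := by
  intro x hx
  rw [KK, Subgroup.mem_sInf]
  intro H hH
  have hmem : H.comap l ∈ SS G n := by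
    haveI hnorm : H.Normal := hH.2.1
    refine ⟨?_, hnorm.comap l, ?_, ?_⟩
    · exact hc.isOpen_preimage _ hH.1
    · rw [Subgroup.index_comap]
      have hdvd : H.relIndex l.range ∣ H.index := Subgroup.relIndex_dvd_index_of_normal H l.range
      exact le_trans (Nat.le_of_dvd (Nat.pos_of_ne_zero hH.2.2.2) hdvd) hH.2.2.1
    · have hopen : IsOpen ((H.comap l : Subgroup G) : Set G) := hc.isOpen_preimage _ hH.1
      have := Subgroup.quotient_finite_of_isOpen (H.comap l) hopen
      exact Subgroup.index_ne_zero_of_finite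
  have hle : KK G n ≤ H.comap l := sInf_le hmem
  exact hle hx

private lemma KK_invariant_iter (n : ℕ) (l : G →* G) (hc : Continuous l)
    {m m' : ℕ} (hmm : m ≤ m') {c : G} (h : iterHom l m c ∈ KK G n) :
    iterHom l m' c ∈ KK G n := by
  induction m', hmm using Nat.le_induction with
  | base => exact h
  | succ k hk ih =>
    rw [← l_iterHom]
    exact KK_invariant n l hc _ ih

variable [T2Space G] [TotallyDisconnectedSpace G]

/-- The subgroups `KK G n` form a neighbourhood basis of `1`. -/
private lemma KK_basis (hF : TypeF G) {U : Set G} (hU : IsOpen U) (h1 : (1 : G) ∈ U) :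
    ∃ n : ℕ, ((KK G n : Subgroup G) : Set G) ⊆ U := by
  obtain ⟨V, hV, h1V, hVU⟩ := compact_exists_isClopen_in_isOpen hU h1
  obtain ⟨H, hH⟩ := IsTopologicalGroup.exist_openNormalSubgroup_sub_clopen_nhds_of_one hV h1V
  refine ⟨H.toSubgroup.index, fun x hx => hVU (hH ?_)⟩
  have hmem : H.toSubgroup ∈ SS G H.toSubgroup.index := by
    refine ⟨H.toOpenSubgroup.isOpen, H.isNormal', le_refl _, ?_⟩
    have := Subgroup.quotient_finite_of_isOpen H.toSubgroup H.toOpenSubgroup.isOpen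
    exact Subgroup.index_ne_zero_of_finite
  exact (sInf_le hmem : KK G H.toSubgroup.index ≤ H.toSubgroup) hx

/-- Theorem A: `G = Con(l) · l(G)` for a type (F) profinite group. -/
private lemma thmA (hF : TypeF G) (l : G →* G) (hc : Continuous l) (x : G) :
    ∃ c : G, Tendsto (fun m : ℕ => (⇑l)^[m] c) atTop (𝓝 1) ∧ c⁻¹ * x ∈ Set.range ⇑l := by
  -- the contraction group, as an increasing union of clopen subgroups
  have hmono : ∀ n : ℕ, Monotone (fun m : ℕ => (KK G n).comap (iterHom l m)) := by
    intro n
    apply monotone_nat_of_le_succ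
    intro m c hcm
    simp only [Subgroup.mem_comap] at hcm ⊢
    rw [← l_iterHom]
    exact KK_invariant n l hc _ hcm
  set A : ℕ → Subgroup G := fun n => ⨆ m : ℕ, (KK G n).comap (iterHom l m) with hA
  have hKA : ∀ n, KK G n ≤ A n := by
    intro n
    have h0 : (KK G n).comap (iterHom l 0) = KK G n := Subgroup.comap_id _
    calc KK G n = (KK G n).comap (iterHom l 0) := h0.symm
      _ ≤ A n := le_iSup (fun m => (KK G n).comap (iterHom l m)) 0
  have hAopen : ∀ n, IsOpen ((A n : Subgroup G) : Set G) :=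
    fun n => Subgroup.isOpen_mono (hKA n) (KK_isOpen hF n)
  have hAclosed : ∀ n, IsClosed ((A n : Subgroup G) : Set G) :=
    fun n => (A n).isClosed_of_isOpen (hAopen n)
  have hAmem : ∀ n c, c ∈ A n ↔ ∃ m, iterHom l m c ∈ KK G n := by
    intro n c
    rw [hA]
    rw [Subgroup.mem_iSup_of_directed ((hmono n).directed_le)]
    simp only [Subgroup.mem_comap]
  have hAanti : ∀ {n n' : ℕ}, n ≤ n' → A n' ≤ A n := by
    intro n n' hnn
    apply iSup_mono
    intro m
    apply Subgroup.comap_mono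
    exact sInf_le_sInf (fun H hH => ⟨hH.1, hH.2.1, le_trans hH.2.2.1 hnn, hH.2.2.2⟩)
  -- the closed sets whose intersection will give the desired element
  have hrange_closed : IsClosed {c : G | c⁻¹ * x ∈ Set.range ⇑l} := by
    have h1 : IsClosed (Set.range ⇑l) := (isCompact_range hc).isClosed
    have h2 : Continuous (fun c : G => c⁻¹ * x) := by continuity
    exact h1.preimage h2
  set Z : ℕ → Set G := fun n => {c : G | c⁻¹ * x ∈ Set.range ⇑l} ∩ (A n : Set G) with hZ
  have hZclosed : ∀ n, IsClosed (Z n) := fun n => hrange_closed.inter (hAclosed n)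
  have hZanti : ∀ n, Z (n + 1) ⊆ Z n := by
    intro n c hcz
    exact ⟨hcz.1, hAanti (Nat.le_succ n) hcz.2⟩
  -- nonemptiness: the key finiteness argument
  have hZne : ∀ n, (Z n).Nonempty := by
    intro n
    haveI hKn : (KK G n).Normal := KK_normal n
    set J : ℕ → Subgroup G := fun m => (iterHom l m).range ⊔ KK G n with hJ
    have hJanti : Antitone J := by
      apply antitone_nat_of_succ_le
      intro m
      apply sup_le _ le_sup_right
      intro y hy
      obtain ⟨a, ha⟩ := hy
      have : y ∈ (iterHom l m).range := ⟨l a, ha⟩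
      exact Subgroup.mem_sup_left this
    have hJopen : ∀ m, IsOpen ((J m : Subgroup G) : Set G) :=
      fun m => Subgroup.isOpen_mono le_sup_right (KK_isOpen hF n)
    have hJindex : ∀ m, (J m).index ≤ (KK G n).index := by
      intro m
      have hdvd : (J m).index ∣ (KK G n).index := Subgroup.index_dvd_of_le le_sup_right
      exact Nat.le_of_dvd (Nat.pos_of_ne_zero (KK_index_ne_zero hF n)) hdvd
    -- pigeonhole: the `J m` all lie in a finite set of subgroups
    have hmaps : Set.MapsTo J Set.univ
        (⋃ j ∈ Finset.range ((KK G n).index + 1),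
          {H : Subgroup G | IsOpen (H : Set G) ∧ H.index = j}) := by
      intro m _
      simp only [Set.mem_iUnion, Finset.mem_range]
      exact ⟨(J m).index, Nat.lt_succ_of_le (hJindex m), hJopen m, rfl⟩
    have hfin : (⋃ j ∈ Finset.range ((KK G n).index + 1),
        {H : Subgroup G | IsOpen (H : Set G) ∧ H.index = j}).Finite :=
      Set.Finite.biUnion (Finset.range _).finite_toSet (fun j _ => hF j)
    obtain ⟨m₁, -, m₂, -, hne, heq⟩ :=
      Set.infinite_univ.exists_ne_map_eq_of_mapsTo hmaps hfin
    have hstab : ∃ m, J (m + 1) = J m := by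
      rcases lt_or_gt_of_ne hne with h | h
      · exact ⟨m₁, le_antisymm (hJanti (Nat.le_succ m₁))
          (heq ▸ hJanti (Nat.succ_le_of_lt h))⟩
      · exact ⟨m₂, le_antisymm (hJanti (Nat.le_succ m₂))
          (heq ▸ hJanti (Nat.succ_le_of_lt h))⟩
    obtain ⟨m, hm⟩ := hstab
    -- extract the coset representative
    have hx1 : iterHom l m x ∈ J (m + 1) := by
      rw [hm]
      exact Subgroup.mem_sup_left (⟨x, rfl⟩ : iterHom l m x ∈ (iterHom l m).range)
    have hx2 : iterHom l m x ∈ ((iterHom l (m + 1)).range : Set G) * (KK G n : Set G) := by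
      rw [← Subgroup.mul_normal]
      exact hx1
    obtain ⟨h, hh, k, hk, hhk⟩ := hx2
    obtain ⟨g, hg⟩ := hh
    refine ⟨x * (l g)⁻¹, ?_, ?_⟩
    · simp only [Set.mem_setOf_eq, mul_inv_rev, inv_inv, inv_mul_cancel_right]
      exact ⟨g, rfl⟩
    · show x * (l g)⁻¹ ∈ A n
      rw [hAmem]
      refine ⟨m, ?_⟩
      have hiter : iterHom l m (l g) = h := by rw [← iterHom_succ_apply, hg]
      have hhk' : h * k = iterHom l m x := hhk
      have : iterHom l m (x * (l g)⁻¹) = (h * k) * h⁻¹ := by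
        rw [map_mul, map_inv, hiter, hhk']
      rw [this]
      have := hKn.conj_mem k hk h
      simpa [mul_assoc] using this
  -- compactness
  have hZcompact : IsCompact (Z 0) := (hZclosed 0).isCompact
  obtain ⟨c, hc'⟩ := IsCompact.nonempty_iInter_of_sequence_nonempty_isCompact_isClosed
    Z hZanti hZne hZcompact hZclosed
  simp only [Set.mem_iInter] at hc'
  refine ⟨c, ?_, (hc' 0).1⟩
  rw [tendsto_atTop_nhds]
  intro U h1U hUopen
  obtain ⟨n, hKU⟩ := KK_basis hF hUopen h1U
  obtain ⟨m, hm⟩ := (hAmem n c).mp (hc' n).2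
  refine ⟨m, fun m' hm' => ?_⟩
  rw [← iterHom_apply]
  exact hKU (KK_invariant_iter n l hc hm' hm)

end Aux

/-- Theorem B(ii): for a profinite group `G` of type (F) and a set `Λ` of
continuous injective endomorphisms with open image such that the images
`λ(G)`, `λ ∈ Λ`, form a neighbourhood base at the identity, `G` equals the
closed subgroup generated by the contraction groups `Con(λ)`, `λ ∈ Λ`. -/
theorem stmt_17 {G : Type*} [Group G] [TopologicalSpace G] [IsTopologicalGroup G]
    [CompactSpace G] [T2Space G] [TotallyDisconnectedSpace G]
    (hF : TypeF G) (Λ : Set (G →* G))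
    (hΛ : ∀ l ∈ Λ, Continuous l ∧ Function.Injective l ∧
      IsOpen (Set.range ⇑l))
    (hbase : ∀ U : Set G, IsOpen U → (1 : G) ∈ U →
      ∃ l ∈ Λ, Set.range ⇑l ⊆ U) :
    (Subgroup.closure
        (⋃ l ∈ Λ,
          {x : G | Tendsto (fun n : ℕ => (⇑l)^[n] x) atTop (𝓝 1)})
      ).topologicalClosure = ⊤ := by
  set N := (Subgroup.closure
      (⋃ l ∈ Λ,
        {x : G | Tendsto (fun n : ℕ => (⇑l)^[n] x) atTop (𝓝 1)})).topologicalClosure with hN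
  rw [Subgroup.eq_top_iff']
  intro g
  by_contra hg
  -- choose a small open set around 1 avoiding `g` modulo `N`
  have hNclosed : IsClosed ((N : Subgroup G) : Set G) :=
    Subgroup.isClosed_topologicalClosure _
  set W : Set G := (fun w : G => g * w⁻¹) ⁻¹' ((N : Subgroup G) : Set G)ᶜ with hW
  have hWopen : IsOpen W := by
    apply hNclosed.isOpen_compl.preimage
    continuity
  have h1W : (1 : G) ∈ W := by
    simp only [hW, Set.mem_preimage, inv_one, mul_one, Set.mem_compl_iff, SetLike.mem_coe]
    exact hg
  obtain ⟨l, hlΛ, hlW⟩ := hbase W hWopen h1W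
  obtain ⟨hcont, -, -⟩ := hΛ l hlΛ
  obtain ⟨c, hctend, hcr⟩ := thmA hF l hcont g
  -- c belongs to N
  have hcN : c ∈ N := by
    apply Subgroup.le_topologicalClosure
    apply Subgroup.subset_closure
    exact Set.mem_biUnion hlΛ hctend
  -- contradiction: `g * (c⁻¹ * g)⁻¹ = c ∈ N` but `c⁻¹ * g ∈ W`
  have hr : c⁻¹ * g ∈ W := hlW hcr
  simp only [hW, Set.mem_preimage, Set.mem_compl_iff, SetLike.mem_coe] at hr
  apply hr
  have : g * (c⁻¹ * g)⁻¹ = c := by group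
  rwa [this]
end

section
/- Let G be a profinite group, φ an injective continuous endomorphism with open image, H = φ(G), and suppose there is a normal subgroup Φ of finite index in G containing H such that every proper open normal subgroup K of G satisfies K·H < G. Fix t ∈ ℕ and let G_t (resp. H_t) be the intersection of all open normal subgroups of G (resp. H) of index at most t. Then G_{t+1} ≥ H_t and |G_t : G_{t+1}| divides |G : H|. -/
/-- The intersection `I_t(G)` of all open normal subgroups of index at most
`t`. -/
def iNorm (G : Type*) [Group G] [TopologicalSpace G] (t : ℕ) : Subgroup G :=
  ⨅ K ∈ {K : Subgroup G | K.Normal ∧ IsOpen (K : Set G) ∧ K.index ≤ t}, K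

/-- Key counting step in the proof of Theorem B(i): with `H = φ(G)` for an
open self-embedding `φ` of a profinite group `G` of type (F), if there is a
proper normal subgroup `Φ` of finite index containing `H` such that `K·H < G`
for every proper open normal `K ⊴ G`, then `H_t ≤ G_{t+1}` and
`|G_t : G_{t+1}|` divides `|G : H|`. -/
theorem stmt_18 {G : Type*} [Group G] [TopologicalSpace G] [IsTopologicalGroup G]
    [CompactSpace G] [T2Space G] [TotallyDisconnectedSpace G]
    (hF : TypeF G) (φ : G →* G) (hφc : Continuous φ)
    (hφi : Function.Injective φ) (hφo : IsOpen (Set.range ⇑φ))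
    (Φ : Subgroup G) (hΦn : Φ.Normal) (hΦfin : Φ.index ≠ 0)
    (hHΦ : φ.range ≤ Φ)
    (hprop : ∀ K : Subgroup G, K.Normal → IsOpen (K : Set G) → K ≠ ⊤ →
      K ⊔ φ.range ≠ ⊤)
    (t : ℕ) :
    (iNorm (↥φ.range) t).map φ.range.subtype ≤ iNorm G (t + 1) ∧
      (iNorm G (t + 1)).relIndex (iNorm G t) ∣ φ.range.index := by
  set H := φ.range with hHdef
  -- `e : G ≃* H` is a topological isomorphism
  let e : G ≃* ↥H := MonoidHom.ofInjective hφi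
  have hec : Continuous ⇑e := Continuous.subtype_mk hφc _
  let eh : G ≃ₜ ↥H := Continuous.homeoOfEquivCompactToT2 (f := e.toEquiv) hec
  have hesc : Continuous ⇑e.symm := eh.symm.continuous
  -- transfer of `iNorm` along `e`
  have hs1 : Function.Surjective ⇑e.symm.toMonoidHom := e.symm.surjective
  have hs2 : Function.Surjective ⇑e.toMonoidHom := e.surjective
  have hGH : iNorm (↥H) t = (iNorm G t).comap e.symm.toMonoidHom := by
    refine le_antisymm ?_ ?_
    · simp only [iNorm, Subgroup.comap_iInf]
      refine le_iInf₂ fun K hK => ?_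
      obtain ⟨hKn, hKo, hKi⟩ := hK
      have h1 : (K.comap e.symm.toMonoidHom).Normal := hKn.comap _
      have h2 : IsOpen ((K.comap e.symm.toMonoidHom : Subgroup ↥H) : Set ↥H) := by
        rw [Subgroup.coe_comap]
        exact hKo.preimage hesc
      have h3 : (K.comap e.symm.toMonoidHom).index ≤ t := by
        rw [Subgroup.index_comap_of_surjective K hs1]
        exact hKi
      exact iInf₂_le _ ⟨h1, h2, h3⟩
    · refine le_iInf₂ fun J hJ => ?_
      obtain ⟨hJn, hJo, hJi⟩ := hJ
      have h1 : (J.comap e.toMonoidHom).Normal := hJn.comap _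
      have h2 : IsOpen ((J.comap e.toMonoidHom : Subgroup G) : Set G) := by
        rw [Subgroup.coe_comap]
        exact hJo.preimage hec
      have h3 : (J.comap e.toMonoidHom).index ≤ t := by
        rw [Subgroup.index_comap_of_surjective J hs2]
        exact hJi
      have hle : iNorm G t ≤ J.comap e.toMonoidHom := iInf₂_le _ ⟨h1, h2, h3⟩
      have heq : (J.comap e.toMonoidHom).comap e.symm.toMonoidHom = J := by
        ext x
        simp [Subgroup.mem_comap]
      exact heq ▸ Subgroup.comap_mono hle
  have hidx : (iNorm (↥H) t).index = (iNorm G t).index := by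
    rw [hGH, Subgroup.index_comap_of_surjective (iNorm G t) hs1]
  -- part 1 : `H_t ≤ G_{t+1}`
  have part1 : (iNorm (↥H) t).map H.subtype ≤ iNorm G (t + 1) := by
    refine le_iInf₂ fun K hK => ?_
    obtain ⟨hKn, hKo, hKi⟩ := hK
    by_cases hKtop : K = ⊤
    · simp [hKtop]
    · have hsup : K ⊔ H ≠ ⊤ := hprop K hKn hKo hKtop
      have hKfin : K.index ≠ 0 :=
        @Subgroup.index_ne_zero_of_finite _ _ _ (K.quotient_finite_of_isOpen hKo)
      have hrel : K.relIndex H ≤ t := by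
        have h1 : K.relIndex (K ⊔ H) * (K ⊔ H).index = K.index :=
          Subgroup.relIndex_mul_index le_sup_left
        have h2 : K.relIndex (K ⊔ H) = K.relIndex H := by
          haveI := hKn
          rw [sup_comm, Subgroup.relIndex_sup_right]
        have hm1 : (K ⊔ H).index ≠ 1 := fun h => hsup (Subgroup.index_eq_one.mp h)
        have hm0 : (K ⊔ H).index ≠ 0 := by
          intro h; rw [h, mul_zero] at h1; exact hKfin h1.symm
        have hr0 : K.relIndex (K ⊔ H) ≠ 0 := by
          intro h; rw [h, zero_mul] at h1; exact hKfin h1.symm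
        have h2r : K.relIndex (K ⊔ H) * 2 ≤ t + 1 := by
          calc K.relIndex (K ⊔ H) * 2
              ≤ K.relIndex (K ⊔ H) * (K ⊔ H).index :=
                Nat.mul_le_mul_left _ (by omega)
            _ = K.index := h1
            _ ≤ t + 1 := hKi
        rw [h2] at h2r hr0
        omega
      have hJmem : (K.subgroupOf H) ∈
          {J : Subgroup ↥H | J.Normal ∧ IsOpen (J : Set ↥H) ∧ J.index ≤ t} := by
        refine ⟨hKn.subgroupOf H, ?_, hrel⟩
        rw [← Subgroup.comap_subtype, Subgroup.coe_comap]
        exact hKo.preimage continuous_subtype_val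
      have hle : iNorm (↥H) t ≤ K.subgroupOf H := iInf₂_le _ hJmem
      calc (iNorm (↥H) t).map H.subtype
          ≤ (K.subgroupOf H).map H.subtype := Subgroup.map_mono hle
        _ = K ⊓ H := Subgroup.subgroupOf_map_subtype K H
        _ ≤ K := inf_le_left
  -- part 2 : divisibility
  have hBA : iNorm G (t + 1) ≤ iNorm G t :=
    le_iInf₂ fun K hK => iInf₂_le K ⟨hK.1, hK.2.1, hK.2.2.trans (Nat.le_succ t)⟩
  have hSfin : {K : Subgroup G | K.Normal ∧ IsOpen (K : Set G) ∧ K.index ≤ t}.Finite := by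
    refine Set.Finite.subset ((Set.finite_Iic t).biUnion fun n _ => hF n) ?_
    rintro K ⟨-, hKo, hKi⟩
    exact Set.mem_biUnion hKi ⟨hKo, rfl⟩
  have hAcoe : ((iNorm G t : Subgroup G) : Set G) =
      ⋂ K ∈ {K : Subgroup G | K.Normal ∧ IsOpen (K : Set G) ∧ K.index ≤ t},
        (K : Set G) := by
    simp [iNorm, Subgroup.coe_iInf]
  have hAopen : IsOpen ((iNorm G t : Subgroup G) : Set G) := by
    rw [hAcoe]
    exact hSfin.isOpen_biInter fun K hK => hK.2.1
  have hA0 : (iNorm G t).index ≠ 0 :=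
    @Subgroup.index_ne_zero_of_finite _ _ _
      ((iNorm G t).quotient_finite_of_isOpen hAopen)
  have hCA : (iNorm (↥H) t).map H.subtype ≤ iNorm G t := part1.trans hBA
  have hchain : ((iNorm (↥H) t).map H.subtype).relIndex (iNorm G (t + 1)) *
      (iNorm G (t + 1)).relIndex (iNorm G t) =
      ((iNorm (↥H) t).map H.subtype).relIndex (iNorm G t) :=
    Subgroup.relIndex_mul_relIndex _ _ _ part1 hBA
  have hCidx : ((iNorm (↥H) t).map H.subtype).index = (iNorm G t).index * H.index := by
    rw [Subgroup.index_map_subtype, hidx]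
  have hfull : ((iNorm (↥H) t).map H.subtype).relIndex (iNorm G t) *
      (iNorm G t).index = (iNorm G t).index * H.index := by
    rw [Subgroup.relIndex_mul_index hCA, hCidx]
  refine ⟨part1, ?_⟩
  have key : (((iNorm (↥H) t).map H.subtype).relIndex (iNorm G (t + 1)) *
      (iNorm G (t + 1)).relIndex (iNorm G t)) * (iNorm G t).index =
      H.index * (iNorm G t).index := by
    rw [hchain, hfull, mul_comm]
  have hmul := Nat.eq_of_mul_eq_mul_right (Nat.pos_of_ne_zero hA0) key
  exact dvd_of_mul_left_eq _ hmul
end
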